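/- arXiv:2111.01579 — 3 statements merged into one kernel-verified Lean document; each statement's English description precedes it below -/
import Mathlib

section
/- Let γ : ℕ → 𝒜 be any sequence of alphabet elements that is admissible, i.e. γ(j+1) ⊆ f(γ(j)) (the image of γ(j) under f) for every j ≥ 0. Then there exists exactly one point x ∈ ℚ₂ such that f^[j](x) ∈ γ(j) for all j ≥ 0; moreover this point x lies in J. -/
open Function Set

/-- The cubic polynomial `f(x) = (9/4)·x·(x−1)²` acting on `ℚ₂`. -/
noncomputable def f : ℚ_[2] → ℚ_[2] := fun x => (9 / 4 : ℚ_[2]) * x * (x - 1) ^ 2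

/-- `J = {x ∈ ℚ₂ : fⁿ(x) ∈ 4ℤ₂ ∪ (1+4ℤ₂) for all n ≥ 0}`, which the paper proves
to be the Julia set of `f` in `ℚ₂`. -/
def J : Set ℚ_[2] :=
  {x | ∀ n : ℕ, f^[n] x ∈
    {y : ℚ_[2] | ‖y‖ ≤ (1 / 2 : ℝ) ^ 2} ∪ {y : ℚ_[2] | ‖y - 1‖ ≤ (1 / 2 : ℝ) ^ 2}}

/-- The disk `A_n = 2^{2n} + 2^{2n+3}ℤ₂`. -/
def A (n : ℕ) : Set ℚ_[2] :=
  {x | ‖x - 2 ^ (2 * n)‖ ≤ (1 / 2 : ℝ) ^ (2 * n + 3)}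

/-- The disk `A'_n = 2^{2n} + 2^{2n+2} + 2^{2n+3}ℤ₂`. -/
def A' (n : ℕ) : Set ℚ_[2] :=
  {x | ‖x - (2 ^ (2 * n) + 2 ^ (2 * n + 2))‖ ≤ (1 / 2 : ℝ) ^ (2 * n + 3)}

/-- The disk `B_n = 1 + 2^{n+1} + 2^{n+3}ℤ₂`. -/
def B (n : ℕ) : Set ℚ_[2] :=
  {x | ‖x - (1 + 2 ^ (n + 1))‖ ≤ (1 / 2 : ℝ) ^ (n + 3)}

/-- The disk `B'_n = 1 + 2^{n+1} + 2^{n+2} + 2^{n+3}ℤ₂`. -/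
def B' (n : ℕ) : Set ℚ_[2] :=
  {x | ‖x - (1 + 2 ^ (n + 1) + 2 ^ (n + 2))‖ ≤ (1 / 2 : ℝ) ^ (n + 3)}

/-- The alphabet `𝒜`: the collection consisting of `{0}`, `{1}`, and
`A_n ∩ J`, `A'_n ∩ J`, `B_n ∩ J`, `B'_n ∩ J` for all `n ≥ 1`. -/
def alphabet : Set (Set ℚ_[2]) :=
  {s | s = {0} ∨ s = {1} ∨
    ∃ n : ℕ, 1 ≤ n ∧ (s = A n ∩ J ∨ s = A' n ∩ J ∨ s = B n ∩ J ∨ s = B' n ∩ J)}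

open Metric Filter
open scoped NNReal

namespace Pf
lemma two_norm : ‖(2:ℚ_[2])‖ = 1/2 := by
  simpa using Padic.norm_p (p := 2)

lemma two_pow_norm (k : ℕ) : ‖(2:ℚ_[2])^k‖ = (1/2:ℝ)^k := by
  rw [norm_pow, two_norm]

lemma nonarch (x y : ℚ_[2]) : ‖x + y‖ ≤ max ‖x‖ ‖y‖ := Padic.nonarchimedean x y

lemma nonarch_le {x y : ℚ_[2]} {a : ℝ} (hx : ‖x‖ ≤ a) (hy : ‖y‖ ≤ a) : ‖x + y‖ ≤ a :=
  le_trans (nonarch x y) (max_le hx hy)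

lemma nonarch_sub_le {x y : ℚ_[2]} {a : ℝ} (hx : ‖x‖ ≤ a) (hy : ‖y‖ ≤ a) : ‖x - y‖ ≤ a := by
  rw [sub_eq_add_neg]; exact nonarch_le hx (by simpa)

lemma norm_add_eq_left {x y : ℚ_[2]} (h : ‖y‖ < ‖x‖) : ‖x + y‖ = ‖x‖ := by
  refine le_antisymm (le_trans (nonarch x y) (max_le le_rfl h.le)) ?_
  have h2 : ‖x‖ ≤ max ‖x + y‖ ‖y‖ := by
    have := nonarch (x + y) (-y)
    simpa using this
  rcases max_cases ‖x + y‖ ‖y‖ with ⟨he, _⟩ | ⟨he, _⟩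
  · rw [he] at h2; exact h2
  · rw [he] at h2; exact absurd h2 (not_le.2 h)

lemma norm_odd {m : ℤ} (h : ¬ ((2:ℤ) ∣ m)) : ‖(m:ℚ_[2])‖ = 1 := by
  refine le_antisymm (Padic.norm_int_le_one m) ?_
  by_contra hlt
  exact h (by exact_mod_cast (Padic.norm_intCast_lt_one_iff (p := 2) (k := m)).1 (lt_of_not_ge hlt))

lemma norm_int_le (m : ℤ) : ‖(m:ℚ_[2])‖ ≤ 1 := Padic.norm_int_le_one m

lemma norm94 : ‖(9/4 : ℚ_[2])‖ = 4 := by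
  have h9 : ‖(9:ℚ_[2])‖ = 1 := by
    have := norm_odd (m := 9) (by decide)
    simpa using this
  have h4 : ‖(4:ℚ_[2])‖ = 1/4 := by
    have : ((4:ℚ_[2])) = 2^2 := by norm_num
    rw [this, two_pow_norm]; norm_num
  rw [norm_div, h9, h4]; norm_num

noncomputable def q (x y : ℚ_[2]) : ℚ_[2] := x^2 + x*y + y^2 - 2*(x+y) + 1

lemma fdiff (x y : ℚ_[2]) : f x - f y = (9/4) * (x - y) * q x y := by
  unfold f q; ring

lemma key {a : ℚ_[2]} {r : ℝ} (hr : 0 < r) {q₀ : ℚ_[2]} (hq : q₀ ≠ 0)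
    (H : ∀ x ∈ closedBall a r, ∀ y ∈ closedBall a r, ‖q x y - q₀‖ ≤ ‖q₀‖/2) :
    (∀ x ∈ closedBall a r, ∀ y ∈ closedBall a r, ‖f x - f y‖ = (4*‖q₀‖) * ‖x - y‖) ∧
    (∀ z : ℚ_[2], ‖z - f a‖ ≤ (4*‖q₀‖) * r → ∃ x ∈ closedBall a r, f x = z) := by
  have hq0pos : (0:ℝ) < ‖q₀‖ := norm_pos_iff.2 hq
  have hqnorm : ∀ x ∈ closedBall a r, ∀ y ∈ closedBall a r, ‖q x y‖ = ‖q₀‖ := by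
    intro x hx y hy
    have h1 : ‖q x y - q₀‖ < ‖q₀‖ := lt_of_le_of_lt (H x hx y hy) (by linarith)
    have : q x y = q₀ + (q x y - q₀) := by ring
    rw [this, norm_add_eq_left h1]
  have hscale : ∀ x ∈ closedBall a r, ∀ y ∈ closedBall a r,
      ‖f x - f y‖ = (4*‖q₀‖) * ‖x - y‖ := by
    intro x hx y hy
    rw [fdiff, norm_mul, norm_mul, norm94, hqnorm x hx y hy]
    ring
  refine ⟨hscale, ?_⟩
  intro z hz
  set u : ℚ_[2] := ((9/4) * q₀)⁻¹ with hu
  have h94 : (9/4 : ℚ_[2]) ≠ 0 := by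
    intro h
    have := norm94
    rw [h, norm_zero] at this
    norm_num at this
  have hune : (9/4 : ℚ_[2]) * q₀ ≠ 0 := mul_ne_zero h94 hq
  have hunorm : ‖u‖ = (4*‖q₀‖)⁻¹ := by
    rw [hu, norm_inv, norm_mul, norm94]
  set T : ℚ_[2] → ℚ_[2] := fun x => x - (f x - z) * u with hT
  have hmaps : MapsTo T (closedBall a r) (closedBall a r) := by
    intro x hx
    simp only [mem_closedBall, dist_eq_norm] at hx ⊢
    have hfz : ‖f x - z‖ ≤ (4*‖q₀‖) * r := by
      have h1 : f x - z = (f x - f a) + (f a - z) := by ring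
      rw [h1]
      refine nonarch_le ?_ ?_
      · rw [hscale x (by simpa [mem_closedBall, dist_eq_norm] using hx) a
          (by simp [mem_closedBall]; positivity)]
        have := mul_le_mul_of_nonneg_left hx (by positivity : (0:ℝ) ≤ 4*‖q₀‖)
        linarith
      · have : ‖f a - z‖ = ‖z - f a‖ := by rw [norm_sub_rev]
        rw [this]; exact hz
    have : T x - a = (x - a) - (f x - z) * u := by rw [hT]; ring
    rw [this]
    refine nonarch_sub_le hx ?_
    rw [norm_mul, hunorm]
    calc ‖f x - z‖ * (4*‖q₀‖)⁻¹ ≤ ((4*‖q₀‖) * r) * (4*‖q₀‖)⁻¹ := by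
          apply mul_le_mul_of_nonneg_right hfz; positivity
      _ = r := by field_simp
  have hlip : LipschitzOnWith (1/2 : ℝ≥0) T (closedBall a r) := by
    apply LipschitzOnWith.of_dist_le_mul
    intro x hx y hy
    have hTd : T x - T y = ((9/4) * u) * (q₀ - q x y) * (x - y) := by
      rw [hT]
      simp only
      have h1 : f x - f y = (9/4) * (x - y) * q x y := fdiff x y
      have h2 : (9/4 : ℚ_[2]) * q₀ * u = 1 := by
        rw [hu]; field_simp
      calc x - (f x - z) * u - (y - (f y - z) * u)
          = (x - y) - (f x - f y) * u := by ring
        _ = (x - y) - ((9/4) * (x - y) * q x y) * u := by rw [h1]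
        _ = (x - y) * ((9/4) * q₀ * u) - ((9/4) * (x - y) * q x y) * u := by rw [h2]; ring
        _ = ((9/4) * u) * (q₀ - q x y) * (x - y) := by ring
    have heq : ‖T x - T y‖ = 4 * (4*‖q₀‖)⁻¹ * (‖q₀ - q x y‖ * ‖x - y‖) := by
      rw [hTd, norm_mul, norm_mul, norm_mul, norm94, hunorm]; ring
    have hosc : ‖q₀ - q x y‖ ≤ ‖q₀‖/2 := by
      rw [norm_sub_rev]; exact H x hx y hy
    have hb : ‖T x - T y‖ ≤ (1/2) * ‖x - y‖ := by
      rw [heq]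
      have h1 : ‖q₀ - q x y‖ * ‖x - y‖ ≤ (‖q₀‖/2) * ‖x - y‖ :=
        mul_le_mul_of_nonneg_right hosc (norm_nonneg _)
      calc 4 * (4*‖q₀‖)⁻¹ * (‖q₀ - q x y‖ * ‖x - y‖)
          ≤ 4 * (4*‖q₀‖)⁻¹ * ((‖q₀‖/2) * ‖x - y‖) := by
            apply mul_le_mul_of_nonneg_left h1; positivity
        _ = (1/2) * ‖x - y‖ := by field_simp
    rw [dist_eq_norm, dist_eq_norm]
    calc ‖T x - T y‖ ≤ (1/2) * ‖x - y‖ := hb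
      _ = ((1/2 : ℝ≥0) : ℝ) * ‖x - y‖ := by norm_num
  have hcontr : ContractingWith (1/2 : ℝ≥0) (hmaps.restrict T _ _) :=
    ⟨by rw [← NNReal.coe_lt_coe]; norm_num, hlip.to_restrict⟩
  obtain ⟨y, hy, hfix, -, -⟩ := hcontr.exists_fixedPoint'
    (isClosed_closedBall.isComplete) hmaps (mem_closedBall_self hr.le) (edist_ne_top _ _)
  refine ⟨y, hy, ?_⟩
  have hfx : y - (f y - z) * u = y := hfix
  have h0 : (f y - z) * u = 0 := by linear_combination -hfx
  have hu0 : u ≠ 0 := inv_ne_zero hune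
  have h1 := (mul_eq_zero.1 h0).resolve_right hu0
  exact sub_eq_zero.1 h1

end Pf

namespace Pf2
open Pf

lemma mem_ball_norm_le {a x : ℚ_[2]} {r v : ℝ} (hx : x ∈ closedBall a r)
    (ha : ‖a‖ ≤ v) (hrv : r ≤ v) : ‖x‖ ≤ v := by
  rw [mem_closedBall, dist_eq_norm] at hx
  have hxx : x = a + (x - a) := by ring
  rw [hxx]; exact nonarch_le ha (le_trans hx hrv)

lemma low_inst {a : ℚ_[2]} {r : ℝ} (ha : ‖a‖ ≤ 1/4) (hr : 0 < r) (hr4 : r ≤ 1/4) :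
    (∀ x ∈ closedBall a r, ∀ y ∈ closedBall a r, ‖f x - f y‖ = 4 * ‖x - y‖) ∧
    (∀ z : ℚ_[2], ‖z - f a‖ ≤ 4 * r → ∃ x ∈ closedBall a r, f x = z) := by
  have H : ∀ x ∈ closedBall a r, ∀ y ∈ closedBall a r, ‖q x y - 1‖ ≤ ‖(1:ℚ_[2])‖/2 := by
    intro x hx y hy
    have hxn : ‖x‖ ≤ 1/4 := mem_ball_norm_le hx ha hr4
    have hyn : ‖y‖ ≤ 1/4 := mem_ball_norm_le hy ha hr4
    have hq1 : q x y - 1 = x*x + x*y + y*y - 2*(x+y) := by unfold q; ring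
    rw [norm_one, hq1]
    have hb : ∀ u v : ℚ_[2], ‖u‖ ≤ 1/4 → ‖v‖ ≤ 1/4 → ‖u * v‖ ≤ (1/2:ℝ) := by
      intro u v hu hv
      rw [norm_mul]
      nlinarith [norm_nonneg u, norm_nonneg v]
    have h4 : ‖2*(x+y)‖ ≤ (1/2:ℝ) := by
      rw [norm_mul, two_norm]
      have : ‖x + y‖ ≤ 1/4 := nonarch_le hxn hyn
      nlinarith [norm_nonneg (x+y)]
    exact nonarch_sub_le (nonarch_le (nonarch_le (hb x x hxn hxn) (hb x y hxn hyn))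
      (hb y y hyn hyn)) h4
  have hk := key hr one_ne_zero H
  simpa [norm_one] using hk

lemma high_inst {e : ℚ_[2]} {ν : ℕ} (hν : 1 ≤ ν) (he : ‖e‖ = (1/2:ℝ)^(ν+1)) :
    (∀ x ∈ closedBall (1+e) ((1/2:ℝ)^(ν+3)), ∀ y ∈ closedBall (1+e) ((1/2:ℝ)^(ν+3)),
       ‖f x - f y‖ = (1/2:ℝ)^ν * ‖x - y‖) ∧
    (∀ z : ℚ_[2], ‖z - f (1+e)‖ ≤ (1/2:ℝ)^ν * (1/2:ℝ)^(ν+3) →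
       ∃ x ∈ closedBall (1+e) ((1/2:ℝ)^(ν+3)), f x = z) := by
  set a : ℚ_[2] := 1 + e with ha
  set r : ℝ := (1/2:ℝ)^(ν+3) with hrdef
  have hr : 0 < r := by positivity
  have h3 : ‖(3:ℚ_[2])‖ = 1 := by
    have := norm_odd (m := 3) (by decide); simpa using this
  have h3e : ‖3*e‖ < ‖(2:ℚ_[2])‖ := by
    rw [norm_mul, h3, two_norm, one_mul, he]
    calc (1/2:ℝ)^(ν+1) ≤ (1/2:ℝ)^2 := by
          apply pow_le_pow_of_le_one (by norm_num) (by norm_num); omega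
      _ < 1/2 := by norm_num
  set q₀ : ℚ_[2] := e * (2 + 3*e) with hq₀
  have he0 : e ≠ 0 := by
    intro h; rw [h, norm_zero] at he
    have : (0:ℝ) < (1/2:ℝ)^(ν+1) := by positivity
    linarith [he ▸ this]
  have h2e : ‖2 + 3*e‖ = 1/2 := by
    rw [norm_add_eq_left h3e, two_norm]
  have hq0n : ‖q₀‖ = (1/2:ℝ)^(ν+2) := by
    rw [hq₀, norm_mul, he, h2e]
    rw [pow_succ]
    ring
  have hq0ne : q₀ ≠ 0 := by
    intro h; rw [h, norm_zero] at hq0n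
    have : (0:ℝ) < (1/2:ℝ)^(ν+2) := by positivity
    linarith
  have hlam : 4 * ‖q₀‖ = (1/2:ℝ)^ν := by
    rw [hq0n]
    rw [pow_succ, pow_succ]; ring
  have hr1 : r ≤ 1 := by
    rw [hrdef]; apply pow_le_one₀ <;> norm_num
  have he1 : ‖e‖ ≤ 1 := by
    rw [he]; apply pow_le_one₀ <;> norm_num
  have H : ∀ x ∈ closedBall a r, ∀ y ∈ closedBall a r, ‖q x y - q₀‖ ≤ ‖q₀‖/2 := by
    intro x hx y hy
    rw [mem_closedBall, dist_eq_norm] at hx hy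
    have hid : q x y - q₀ = ((x-a)+(y-a)) + 3*e*((x-a)+(y-a))
        + ((x-a)*(x-a) + (x-a)*(y-a) + (y-a)*(y-a)) := by
      rw [ha]; unfold q; ring
    have hst : ‖(x-a)+(y-a)‖ ≤ r := nonarch_le hx hy
    have h1 : ‖3*e*((x-a)+(y-a))‖ ≤ r := by
      rw [norm_mul, norm_mul, h3, one_mul]
      calc ‖e‖ * ‖(x-a)+(y-a)‖ ≤ 1 * r := by
            apply mul_le_mul he1 hst (norm_nonneg _) (by norm_num)
        _ = r := one_mul r
    have hquad : ∀ u v : ℚ_[2], ‖u‖ ≤ r → ‖v‖ ≤ r → ‖u*v‖ ≤ r := by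
      intro u v hu hv
      rw [norm_mul]
      calc ‖u‖ * ‖v‖ ≤ r * 1 := by
            apply mul_le_mul hu (le_trans hv hr1) (norm_nonneg _) hr.le
        _ = r := mul_one r
    have h2 : ‖(x-a)*(x-a) + (x-a)*(y-a) + (y-a)*(y-a)‖ ≤ r :=
      nonarch_le (nonarch_le (hquad _ _ hx hx) (hquad _ _ hx hy)) (hquad _ _ hy hy)
    have hq2 : ‖q₀‖/2 = r := by
      rw [hq0n, hrdef, pow_succ]; ring
    rw [hid, hq2]
    exact nonarch_le (nonarch_le hst h1) h2
  have hk := key hr hq0ne H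
  rw [hlam] at hk
  exact hk

end Pf2

namespace Pf3
open Pf Pf2

inductive Code
  | lo (w : Bool) (n : ℕ)   -- A_{n+1} (w=false) or A'_{n+1} (w=true)
  | hi (w : Bool) (n : ℕ)   -- B_{n+1} (w=false) or B'_{n+1} (w=true)

open Code

noncomputable def ctr : Code → ℚ_[2]
  | lo false n => 2^(2*n+2)
  | lo true n => 5 * 2^(2*n+2)
  | hi false n => 1 + 2^(n+2)
  | hi true n => 1 + 3 * 2^(n+2)

noncomputable def rad : Code → ℝ
  | lo _ n => (1/2:ℝ)^(2*n+5)
  | hi _ n => (1/2:ℝ)^(n+4)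

noncomputable def lam : Code → ℝ
  | lo _ _ => 4
  | hi _ n => (1/2:ℝ)^(n+1)

def ht : Code → ℕ
  | lo _ n => n+1
  | hi _ n => n+2

noncomputable def D (s : Code) : Set ℚ_[2] := closedBall (ctr s) (rad s)

lemma rad_pos (s : Code) : 0 < rad s := by cases s <;> unfold rad <;> positivity

lemma lam_pos (s : Code) : 0 < lam s := by
  cases s with
  | lo w n => unfold lam; norm_num
  | hi w n => unfold lam; positivity

lemma norm3 : ‖(3:ℚ_[2])‖ = 1 := by
  have := norm_odd (m := 3) (by decide); simpa using this

lemma norm5 : ‖(5:ℚ_[2])‖ = 1 := by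
  have := norm_odd (m := 5) (by decide); simpa using this

lemma ctr_lo_norm (w : Bool) (n : ℕ) : ‖ctr (lo w n)‖ = (1/2:ℝ)^(2*n+2) := by
  cases w
  · exact two_pow_norm _
  · show ‖(5:ℚ_[2]) * 2^(2*n+2)‖ = _
    rw [norm_mul, norm5, two_pow_norm, one_mul]

lemma ctr_hi_sub_one (w : Bool) (n : ℕ) : ‖ctr (hi w n) - 1‖ = (1/2:ℝ)^(n+2) := by
  cases w
  · show ‖(1:ℚ_[2]) + 2^(n+2) - 1‖ = _
    have h : (1:ℚ_[2]) + 2^(n+2) - 1 = 2^(n+2) := by ring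
    rw [h, two_pow_norm]
  · show ‖(1:ℚ_[2]) + 3 * 2^(n+2) - 1‖ = _
    have h : (1:ℚ_[2]) + 3 * 2^(n+2) - 1 = 3 * 2^(n+2) := by ring
    rw [h, norm_mul, norm3, two_pow_norm, one_mul]

lemma half_lt_half_pow {i j : ℕ} (h : i < j) : (1/2:ℝ)^j < (1/2)^i :=
  pow_lt_pow_right_of_lt_one₀ (by norm_num) (by norm_num) h

lemma half_pow_le {i j : ℕ} (h : i ≤ j) : (1/2:ℝ)^j ≤ (1/2)^i :=
  pow_le_pow_of_le_one (by norm_num) (by norm_num) h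

lemma half_pow_inj {i j : ℕ} (h : (1/2:ℝ)^i = (1/2)^j) : i = j := by
  rcases lt_trichotomy i j with hl | he | hl
  · exact absurd h (ne_of_gt (half_lt_half_pow hl))
  · exact he
  · exact absurd h.symm (ne_of_gt (half_lt_half_pow hl))

lemma mem_lo_norm {w : Bool} {n : ℕ} {x : ℚ_[2]} (hx : x ∈ D (lo w n)) :
    ‖x‖ = (1/2:ℝ)^(2*n+2) ∧ ‖x - 1‖ = 1 := by
  rw [D, mem_closedBall, dist_eq_norm] at hx
  have hrad : rad (lo w n) = (1/2:ℝ)^(2*n+5) := rfl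
  rw [hrad] at hx
  have hlt : ‖x - ctr (lo w n)‖ < ‖ctr (lo w n)‖ := by
    rw [ctr_lo_norm]
    exact lt_of_le_of_lt hx (half_lt_half_pow (by omega))
  have h1 : ‖x‖ = (1/2:ℝ)^(2*n+2) := by
    have hxe : x = ctr (lo w n) + (x - ctr (lo w n)) := by ring
    rw [hxe, norm_add_eq_left hlt, ctr_lo_norm]
  refine ⟨h1, ?_⟩
  have hlt2 : ‖x‖ < ‖(-1 : ℚ_[2])‖ := by
    rw [norm_neg, norm_one, h1]
    exact lt_of_le_of_lt (half_pow_le (by omega : 1 ≤ 2*n+2)) (by norm_num)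
  have hxe : x - 1 = (-1) + x := by ring
  rw [hxe, norm_add_eq_left hlt2, norm_neg, norm_one]

lemma mem_hi_norm {w : Bool} {n : ℕ} {x : ℚ_[2]} (hx : x ∈ D (hi w n)) :
    ‖x - 1‖ = (1/2:ℝ)^(n+2) ∧ ‖x‖ = 1 := by
  rw [D, mem_closedBall, dist_eq_norm] at hx
  have hrad : rad (hi w n) = (1/2:ℝ)^(n+4) := rfl
  rw [hrad] at hx
  have hlt : ‖x - ctr (hi w n)‖ < ‖ctr (hi w n) - 1‖ := by
    rw [ctr_hi_sub_one]
    exact lt_of_le_of_lt hx (half_lt_half_pow (by omega))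
  have h1 : ‖x - 1‖ = (1/2:ℝ)^(n+2) := by
    have hxe : x - 1 = (ctr (hi w n) - 1) + (x - ctr (hi w n)) := by ring
    rw [hxe, norm_add_eq_left hlt, ctr_hi_sub_one]
  refine ⟨h1, ?_⟩
  have hlt2 : ‖x - 1‖ < ‖(1:ℚ_[2])‖ := by
    rw [norm_one, h1]
    exact lt_of_le_of_lt (half_pow_le (by omega : 1 ≤ n+2)) (by norm_num)
  have hxe : x = 1 + (x - 1) := by ring
  rw [hxe, norm_add_eq_left hlt2, norm_one]

lemma fnorm (x : ℚ_[2]) : ‖f x‖ = 4 * (‖x‖ * ‖x-1‖^2) := by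
  unfold f
  rw [norm_mul, norm_mul, norm_pow, norm94]
  ring

lemma scale (s : Code) : ∀ x ∈ D s, ∀ y ∈ D s, ‖f x - f y‖ = lam s * ‖x - y‖ := by
  cases s with
  | lo w n =>
    have := (low_inst (a := ctr (lo w n)) (r := (1/2:ℝ)^(2*n+5))
      (by rw [ctr_lo_norm]; exact le_trans (half_pow_le (by omega : 2 ≤ 2*n+2)) (by norm_num))
      (by positivity)
      (le_trans (half_pow_le (by omega : 2 ≤ 2*n+5)) (by norm_num))).1
    simpa [D, rad, lam] using this
  | hi w n =>
    have hctr : ctr (hi w n) = 1 + (ctr (hi w n) - 1) := by ring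
    have hi1 := (high_inst (ν := n+1) (e := ctr (hi w n) - 1) (by omega)
      (by rw [ctr_hi_sub_one])).1
    rw [← hctr] at hi1
    simpa [D, rad, lam] using hi1

lemma surj (s : Code) : ∀ z : ℚ_[2], ‖z - f (ctr s)‖ ≤ lam s * rad s →
    ∃ x ∈ D s, f x = z := by
  cases s with
  | lo w n =>
    have := (low_inst (a := ctr (lo w n)) (r := (1/2:ℝ)^(2*n+5))
      (by rw [ctr_lo_norm]; exact le_trans (half_pow_le (by omega : 2 ≤ 2*n+2)) (by norm_num))
      (by positivity)
      (le_trans (half_pow_le (by omega : 2 ≤ 2*n+5)) (by norm_num))).2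
    simpa [D, rad, lam] using this
  | hi w n =>
    have hctr : ctr (hi w n) = 1 + (ctr (hi w n) - 1) := by ring
    have hi2 := (high_inst (ν := n+1) (e := ctr (hi w n) - 1) (by omega)
      (by rw [ctr_hi_sub_one])).2
    rw [← hctr] at hi2
    simpa [D, rad, lam] using hi2

end Pf3

namespace Pf4
open Pf Pf2

lemma fcont : Continuous f := by
  unfold f
  exact (continuous_const.mul continuous_id).mul
    ((continuous_id.sub continuous_const).pow 2)

lemma fcont_iter (j : ℕ) : Continuous (f^[j]) := by
  induction j with
  | zero => simpa using continuous_id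
  | succ n ih =>
    rw [Function.iterate_succ]
    exact ih.comp fcont

section
variable (c : ℕ → ℚ_[2]) (r lam : ℕ → ℝ)

lemma approx (hr : ∀ j, 0 < r j)
    (hsurj : ∀ j, ∀ z ∈ closedBall (c (j+1)) (r (j+1)), ∃ x ∈ closedBall (c j) (r j), f x = z) :
    ∀ N k, ∃ x, ∀ j, j ≤ N → f^[j] x ∈ closedBall (c (k+j)) (r (k+j)) := by
  intro N
  induction N with
  | zero =>
    intro k
    refine ⟨c k, fun j hj => ?_⟩
    interval_cases j
    simp only [Function.iterate_zero_apply, Nat.add_zero]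
    exact mem_closedBall_self (hr k).le
  | succ N ih =>
    intro k
    obtain ⟨y, hy⟩ := ih (k+1)
    have hy0 : y ∈ closedBall (c (k+1)) (r (k+1)) := by simpa using hy 0 (Nat.zero_le _)
    obtain ⟨x, hx, hfx⟩ := hsurj k y hy0
    refine ⟨x, fun j hj => ?_⟩
    cases j with
    | zero => simpa using hx
    | succ i =>
      rw [Function.iterate_succ_apply, hfx]
      have : k + (i+1) = (k+1) + i := by omega
      rw [this]
      exact hy i (by omega)

lemma expand (hscale : ∀ j, ∀ x ∈ closedBall (c j) (r j), ∀ y ∈ closedBall (c j) (r j),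
      ‖f x - f y‖ = lam j * ‖x - y‖) :
    ∀ N x y, (∀ j, j < N → f^[j] x ∈ closedBall (c j) (r j)) →
      (∀ j, j < N → f^[j] y ∈ closedBall (c j) (r j)) →
      ‖f^[N] x - f^[N] y‖ = (∏ j ∈ Finset.range N, lam j) * ‖x - y‖ := by
  intro N
  induction N with
  | zero => intro x y _ _; simp
  | succ N ih =>
    intro x y hx hy
    rw [Function.iterate_succ_apply', Function.iterate_succ_apply',
      hscale N _ (hx N (by omega)) _ (hy N (by omega)),
      ih x y (fun j hj => hx j (by omega)) (fun j hj => hy j (by omega)),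
      Finset.prod_range_succ]
    ring

lemma close (hr : ∀ j, 0 < r j) (hlam : ∀ j, 0 < lam j)
    (hscale : ∀ j, ∀ x ∈ closedBall (c j) (r j), ∀ y ∈ closedBall (c j) (r j),
      ‖f x - f y‖ = lam j * ‖x - y‖) :
    ∀ N x y, (∀ j, j ≤ N → f^[j] x ∈ closedBall (c j) (r j)) →
      (∀ j, j ≤ N → f^[j] y ∈ closedBall (c j) (r j)) →
      ‖x - y‖ ≤ 2 * (r N / ∏ j ∈ Finset.range N, lam j) := by
  intro N x y hx hy
  have hprod : (0:ℝ) < ∏ j ∈ Finset.range N, lam j :=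
    Finset.prod_pos (fun j _ => hlam j)
  have hN : ‖f^[N] x - f^[N] y‖ ≤ 2 * r N := by
    have h1 : ‖f^[N] x - f^[N] y‖ ≤ ‖f^[N] x - c N‖ + ‖c N - f^[N] y‖ := by
      have : f^[N] x - f^[N] y = (f^[N] x - c N) + (c N - f^[N] y) := by ring
      rw [this]; exact norm_add_le _ _
    have h2 : ‖f^[N] x - c N‖ ≤ r N := by
      have := hx N le_rfl; rwa [mem_closedBall, dist_eq_norm] at this
    have h3 : ‖c N - f^[N] y‖ ≤ r N := by
      have := hy N le_rfl; rw [mem_closedBall, dist_eq_norm] at this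
      rw [norm_sub_rev]; exact this
    linarith
  have heq := expand c r lam hscale N x y (fun j hj => hx j (by omega))
    (fun j hj => hy j (by omega))
  rw [heq] at hN
  rw [div_eq_mul_inv]
  calc ‖x - y‖ = ((∏ j ∈ Finset.range N, lam j) * ‖x - y‖) * (∏ j ∈ Finset.range N, lam j)⁻¹ := by
        field_simp
    _ ≤ (2 * r N) * (∏ j ∈ Finset.range N, lam j)⁻¹ := by
        apply mul_le_mul_of_nonneg_right hN
        positivity
    _ = 2 * (r N * (∏ j ∈ Finset.range N, lam j)⁻¹) := by ring

lemma track (hr : ∀ j, 0 < r j) (hlam : ∀ j, 0 < lam j)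
    (hscale : ∀ j, ∀ x ∈ closedBall (c j) (r j), ∀ y ∈ closedBall (c j) (r j),
      ‖f x - f y‖ = lam j * ‖x - y‖)
    (hsurj : ∀ j, ∀ z ∈ closedBall (c (j+1)) (r (j+1)), ∃ x ∈ closedBall (c j) (r j), f x = z)
    (hdecay : Tendsto (fun N => r N / ∏ j ∈ Finset.range N, lam j) atTop (nhds 0)) :
    (∃ x : ℚ_[2], ∀ j, f^[j] x ∈ closedBall (c j) (r j)) ∧
    (∀ x y : ℚ_[2], (∀ j, f^[j] x ∈ closedBall (c j) (r j)) →
      (∀ j, f^[j] y ∈ closedBall (c j) (r j)) → x = y) := by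
  have hdecay2 : Tendsto (fun N => 2 * (r N / ∏ j ∈ Finset.range N, lam j)) atTop (nhds 0) := by
    have := hdecay.const_mul (2:ℝ)
    simpa using this
  constructor
  · -- existence
    have happrox := approx c r hr hsurj
    choose xs hxs using fun N => happrox N 0
    simp only [Nat.zero_add] at hxs
    have hcauchy : CauchySeq xs := by
      rw [Metric.cauchySeq_iff']
      intro ε hε
      obtain ⟨N, hN⟩ := (hdecay2.eventually_lt_const hε).exists
      refine ⟨N, fun n hn => ?_⟩
      rw [dist_eq_norm]
      calc ‖xs n - xs N‖ ≤ 2 * (r N / ∏ j ∈ Finset.range N, lam j) :=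
            close c r lam hr hlam hscale N (xs n) (xs N)
              (fun j hj => hxs n j (le_trans hj hn)) (fun j hj => hxs N j hj)
        _ < ε := hN
    obtain ⟨x, hx⟩ := cauchySeq_tendsto_of_complete hcauchy
    refine ⟨x, fun j => ?_⟩
    have htendj : Tendsto (fun n => f^[j] (xs n)) atTop (nhds (f^[j] x)) :=
      ((fcont_iter j).tendsto x).comp hx
    refine isClosed_closedBall.mem_of_tendsto htendj ?_
    filter_upwards [eventually_ge_atTop j] with n hn
    exact hxs n j hn
  · intro x y hx hy
    have hb : ∀ N, ‖x - y‖ ≤ 2 * (r N / ∏ j ∈ Finset.range N, lam j) := fun N =>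
      close c r lam hr hlam hscale N x y (fun j _ => hx j) (fun j _ => hy j)
    have : ‖x - y‖ ≤ 0 := ge_of_tendsto' hdecay2 hb
    have := le_antisymm this (norm_nonneg _)
    rwa [norm_sub_eq_zero_iff] at this

end
end Pf4

namespace Pf5
open Pf Pf2 Pf3 Pf4

lemma hp_le {a b c d : ℕ} (h : b + c ≤ d + a) :
    (1/2:ℝ)^a * 2^b ≤ (1/2:ℝ)^c * 2^d := by
  have hb : (1/2:ℝ)^a * 2^b = 2^b / 2^a := by
    rw [div_pow, one_pow]; ring
  have hd : (1/2:ℝ)^c * 2^d = 2^d / 2^c := by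
    rw [div_pow, one_pow]; ring
  rw [hb, hd, div_le_div_iff₀ (by positivity) (by positivity), ← pow_add, ← pow_add]
  exact pow_le_pow_right₀ (by norm_num) h

/-- decay of `r N / ∏ lam` from the Lyapunov step inequality -/
lemma decay (r lam : ℕ → ℝ) (h : ℕ → ℕ) (hr : ∀ j, 0 < r j) (hlam : ∀ j, 0 < lam j)
    (hstep : ∀ j, (r (j+1))^2 * 2^(h (j+1)) * 2 ≤ (lam j * r j)^2 * 2^(h j)) :
    Tendsto (fun N => r N / ∏ j ∈ Finset.range N, lam j) atTop (nhds 0) := by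
  set ψ : ℕ → ℝ := fun N => r N / ∏ j ∈ Finset.range N, lam j with hψdef
  have hprod : ∀ N, (0:ℝ) < ∏ j ∈ Finset.range N, lam j :=
    fun N => Finset.prod_pos (fun j _ => hlam j)
  have hψpos : ∀ N, 0 < ψ N := fun N => div_pos (hr N) (hprod N)
  set Θ : ℕ → ℝ := fun N => (ψ N)^2 * 2^(h N) with hΘdef
  have hΘstep : ∀ N, Θ (N+1) ≤ Θ N / 2 := by
    intro N
    have hs := hstep N
    set P : ℝ := ∏ j ∈ Finset.range N, lam j with hP
    have hPpos : 0 < P := hprod N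
    have e1 : Θ (N+1) = (r (N+1)^2 * 2^(h (N+1))) / (P * lam N)^2 := by
      show ψ (N+1)^2 * 2^(h (N+1)) = _
      have hψ1 : ψ (N+1) = r (N+1) / (P * lam N) := by
        show r (N+1) / ∏ j ∈ Finset.range (N+1), lam j = _
        rw [Finset.prod_range_succ]
      rw [hψ1, div_pow, div_mul_eq_mul_div]
    have e2 : Θ N = (r N ^2 * 2^(h N)) / P^2 := by
      show ψ N ^2 * 2^(h N) = _
      have hψ0 : ψ N = r N / P := rfl
      rw [hψ0, div_pow, div_mul_eq_mul_div]
    rw [e1, e2, div_div,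
      div_le_div_iff₀ (pow_pos (mul_pos hPpos (hlam N)) 2)
        (mul_pos (pow_pos hPpos 2) two_pos)]
    calc r (N+1)^2 * 2^(h (N+1)) * (P^2 * 2)
        = (r (N+1)^2 * 2^(h (N+1)) * 2) * P^2 := by ring
      _ ≤ ((lam N * r N)^2 * 2^(h N)) * P^2 := by
          apply mul_le_mul_of_nonneg_right hs (by positivity)
      _ = r N^2 * 2^(h N) * (P * lam N)^2 := by ring
  have hΘgeom : ∀ N, Θ N ≤ Θ 0 * (1/2)^N := by
    intro N
    induction N with
    | zero => simp
    | succ N ih =>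
      calc Θ (N+1) ≤ Θ N / 2 := hΘstep N
        _ ≤ (Θ 0 * (1/2)^N) / 2 := by linarith
        _ = Θ 0 * (1/2)^(N+1) := by rw [pow_succ]; ring
  have hψsq : ∀ N, (ψ N)^2 ≤ Θ 0 * (1/2)^N := by
    intro N
    have h1 : (ψ N)^2 ≤ Θ N := by
      have h2 : (1:ℝ) ≤ 2^(h N) := one_le_pow₀ (by norm_num)
      calc (ψ N)^2 = (ψ N)^2 * 1 := by ring
        _ ≤ (ψ N)^2 * 2^(h N) := by
            apply mul_le_mul_of_nonneg_left h2 (sq_nonneg _)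
        _ = Θ N := rfl
    exact le_trans h1 (hΘgeom N)
  have hsqtend : Tendsto (fun N => (ψ N)^2) atTop (nhds 0) := by
    apply squeeze_zero (fun N => sq_nonneg _) hψsq
    have := (tendsto_pow_atTop_nhds_zero_of_lt_one (by norm_num : (0:ℝ) ≤ 1/2)
      (by norm_num : (1/2:ℝ) < 1)).const_mul (Θ 0)
    simpa using this
  have := hsqtend.sqrt
  simp only [Real.sqrt_zero] at this
  have heq : (fun N => Real.sqrt ((ψ N)^2)) = ψ := by
    funext N; exact Real.sqrt_sq (hψpos N).le
  rwa [heq] at this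

/-- step inequality, kind 1 : `lo _ (n+1) → lo _ n` -/
lemma step1 (n : ℕ) :
    ((1/2:ℝ)^(2*n+5))^2 * 2^(n+1) * 2 ≤ ((4:ℝ) * (1/2)^(2*n+7))^2 * 2^(n+2) := by
  have h4 : (4:ℝ) * (1/2)^(2*n+7) = (1/2)^(2*n+5) := by
    have : (2*n+7) = (2*n+5) + 2 := by omega
    rw [this, pow_add]; ring
  rw [h4, pow_succ]
  apply le_of_eq; ring

/-- step inequality, kind 2 : `lo _ 0 → hi _ m` -/
lemma step2 (m : ℕ) :
    ((1/2:ℝ)^(m+4))^2 * 2^(m+2) * 2 ≤ ((4:ℝ) * (1/2)^5)^2 * 2^1 := by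
  have hL : ((1/2:ℝ)^(m+4))^2 * 2^(m+2) * 2 = (1/2)^(2*m+8) * 2^(m+3) := by
    rw [← pow_mul, pow_succ]
    have : (m+4)*2 = 2*m+8 := by omega
    rw [this]; ring
  have hR : ((4:ℝ) * (1/2)^5)^2 * 2^1 = (1/2)^6 * 2^1 := by norm_num
  rw [hL, hR]
  exact hp_le (by omega)

/-- step inequality, kind 3 : `hi _ m → lo _ m` -/
lemma step3 (m : ℕ) :
    ((1/2:ℝ)^(2*m+5))^2 * 2^(m+1) * 2 ≤ (((1/2:ℝ)^(m+1)) * (1/2)^(m+4))^2 * 2^(m+2) := by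
  have hlr : ((1/2:ℝ)^(m+1)) * (1/2)^(m+4) = (1/2)^(2*m+5) := by
    rw [← pow_add]
    congr 1; omega
  rw [hlr, pow_succ]
  apply le_of_eq; ring

/-- uniform step inequality for legal code transitions -/
def legal : Code → Code → Prop
  | Code.lo _ (n+1), Code.lo _ m => m = n
  | Code.lo _ 0, Code.hi _ _ => True
  | Code.hi _ m, Code.lo _ m' => m' = m
  | _, _ => False

lemma legal_step {s t : Code} (h : legal s t) :
    (rad t)^2 * 2^(ht t) * 2 ≤ (lam s * rad s)^2 * 2^(ht s) := by
  cases s with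
  | lo w n =>
    cases n with
    | zero =>
      cases t with
      | lo w' m => exact absurd h (by simp [legal])
      | hi w' m => simpa [rad, lam, ht] using step2 m
    | succ n =>
      cases t with
      | lo w' m =>
        have hm : m = n := h
        subst hm
        simpa [rad, lam, ht, show 2*(m+1)+5 = 2*m+7 by omega, show m+1+1 = m+2 by omega] using step1 m
      | hi w' m => exact absurd h (by simp [legal])
  | hi w m =>
    cases t with
    | lo w' m' =>
      have hm : m' = m := h
      subst hm
      simpa [rad, lam, ht] using step3 m'
    | hi w' m' => exact absurd h (by simp [legal])

end Pf5

namespace Pf6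
open Pf Pf2 Pf3 Pf4 Pf5 Code

noncomputable def σ : Code → Code
  | lo false 0 => hi false 1
  | lo true 0 => hi false 0
  | lo w (n+1) => lo w n
  | hi _ 0 => lo true 0
  | hi _ (n+1) => lo false (n+1)

lemma legal_sigma (s : Code) : legal s (σ s) := by
  cases s with
  | lo w n => cases w <;> cases n <;> simp [σ, legal]
  | hi w n => cases w <;> cases n <;> simp [σ, legal]

lemma norm_2pow_mul_le (k : ℕ) (E : ℚ_[2]) (hE : ‖E‖ ≤ 1) :
    ‖(2:ℚ_[2])^k * E‖ ≤ (1/2:ℝ)^k := by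
  rw [norm_mul, two_pow_norm]
  exact mul_le_of_le_one_right (by positivity) hE

lemma norm_int_mul_2pow_le (m : ℤ) (k : ℕ) : ‖(m:ℚ_[2]) * 2^k‖ ≤ 1 := by
  rw [norm_mul]
  have h1 := norm_int_le m
  have h2 : ‖(2:ℚ_[2])^k‖ ≤ 1 := by
    rw [two_pow_norm]
    exact pow_le_one₀ (by norm_num) (by norm_num)
  exact mul_le_one₀ h1 (norm_nonneg _) h2

lemma lam_rad_lo (w : Bool) (n : ℕ) : lam (lo w n) * rad (lo w n) = (1/2:ℝ)^(2*n+3) := by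
  show (4:ℝ) * (1/2)^(2*n+5) = (1/2)^(2*n+3)
  have h : 2*n+5 = (2*n+3)+2 := by omega
  rw [h, pow_add]; ring

lemma lam_rad_hi (w : Bool) (n : ℕ) : lam (hi w n) * rad (hi w n) = (1/2:ℝ)^(2*n+5) := by
  show (1/2:ℝ)^(n+1) * (1/2)^(n+4) = (1/2)^(2*n+5)
  rw [← pow_add]; congr 1; omega

lemma sigma_img (s : Code) :
    ‖f (ctr s) - ctr (σ s)‖ ≤ lam s * rad s ∧ rad (σ s) ≤ lam s * rad s := by
  cases s with
  | lo w n =>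
    rw [lam_rad_lo]
    cases w with
    | false =>
      cases n with
      | zero =>
        constructor
        · show ‖f (2^(2*0+2)) - (1 + 2^(1+2))‖ ≤ (1/2:ℝ)^3
          have hid : f (2^(2*0+2)) - (1 + 2^(1+2) : ℚ_[2]) = 2^3 * 9 := by
            unfold f; norm_num
          rw [hid]
          exact norm_2pow_mul_le 3 9 (by exact_mod_cast norm_int_le 9)
        · show (1/2:ℝ)^(1+4) ≤ (1/2)^(2*0+3)
          exact half_pow_le (by omega)
      | succ n =>
        constructor
        · show ‖f (2^(2*(n+1)+2)) - 2^(2*n+2)‖ ≤ (1/2:ℝ)^(2*(n+1)+3)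
          have hid : f (2^(2*(n+1)+2)) - (2^(2*n+2) : ℚ_[2])
              = 2^(2*n+5) * (1 - 9*2^(2*n+2) + 9*2^(4*n+5)) := by
            unfold f; ring
          rw [hid]
          have h25 : 2*(n+1)+3 = 2*n+5 := by omega
          rw [h25]
          refine norm_2pow_mul_le _ _ ?_
          refine nonarch_le (nonarch_sub_le (by simpa using norm_int_le 1) ?_) ?_
          · exact_mod_cast norm_int_mul_2pow_le 9 (2*n+2)
          · exact_mod_cast norm_int_mul_2pow_le 9 (4*n+5)
        · show rad (lo false n) ≤ (1/2:ℝ)^(2*(n+1)+3)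
          show (1/2:ℝ)^(2*n+5) ≤ (1/2:ℝ)^(2*(n+1)+3)
          exact half_pow_le (by omega)
    | true =>
      cases n with
      | zero =>
        constructor
        · show ‖f (5 * 2^(2*0+2)) - (1 + 2^(0+2))‖ ≤ (1/2:ℝ)^3
          have hid : f (5 * 2^(2*0+2)) - (1 + 2^(0+2) : ℚ_[2]) = 2^4 * 1015 := by
            unfold f; norm_num
          rw [hid]
          calc ‖(2:ℚ_[2])^4 * 1015‖ ≤ (1/2:ℝ)^4 :=
                norm_2pow_mul_le 4 1015 (by exact_mod_cast norm_int_le 1015)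
            _ ≤ (1/2:ℝ)^3 := half_pow_le (by omega)
        · show (1/2:ℝ)^(0+4) ≤ (1/2)^(2*0+3)
          exact half_pow_le (by omega)
      | succ n =>
        constructor
        · show ‖f (5 * 2^(2*(n+1)+2)) - 5 * 2^(2*n+2)‖ ≤ (1/2:ℝ)^(2*(n+1)+3)
          have hid : f (5 * 2^(2*(n+1)+2)) - (5 * 2^(2*n+2) : ℚ_[2])
              = 2^(2*n+5) * (5 * (1 - 45*2^(2*n+2) + 225*2^(4*n+5))) := by
            unfold f; ring
          rw [hid]
          have h25 : 2*(n+1)+3 = 2*n+5 := by omega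
          rw [h25]
          refine norm_2pow_mul_le _ _ ?_
          rw [norm_mul]
          have h5 : ‖(5:ℚ_[2])‖ ≤ 1 := by exact_mod_cast norm_int_le 5
          have hE : ‖(1 - 45*2^(2*n+2) + 225*2^(4*n+5) : ℚ_[2])‖ ≤ 1 := by
            refine nonarch_le (nonarch_sub_le (by simpa using norm_int_le 1) ?_) ?_
            · exact_mod_cast norm_int_mul_2pow_le 45 (2*n+2)
            · exact_mod_cast norm_int_mul_2pow_le 225 (4*n+5)
          exact mul_le_one₀ h5 (norm_nonneg _) hE
        · show rad (lo true n) ≤ (1/2:ℝ)^(2*(n+1)+3)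
          show (1/2:ℝ)^(2*n+5) ≤ (1/2:ℝ)^(2*(n+1)+3)
          exact half_pow_le (by omega)
  | hi w n =>
    rw [lam_rad_hi]
    cases n with
    | zero =>
      cases w with
      | false =>
        constructor
        · show ‖f (1 + 2^(0+2)) - 5 * 2^(2*0+2)‖ ≤ (1/2:ℝ)^5
          have hid : f (1 + 2^(0+2)) - (5 * 2^(2*0+2) : ℚ_[2]) = 2^5 * 5 := by
            unfold f; norm_num
          rw [hid]
          exact norm_2pow_mul_le 5 5 (by exact_mod_cast norm_int_le 5)
        · show (1/2:ℝ)^(2*0+5) ≤ (1/2)^5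
          exact half_pow_le (by omega)
      | true =>
        constructor
        · show ‖f (1 + 3 * 2^(0+2)) - 5 * 2^(2*0+2)‖ ≤ (1/2:ℝ)^5
          have hid : f (1 + 3 * 2^(0+2)) - (5 * 2^(2*0+2) : ℚ_[2]) = 2^5 * 131 := by
            unfold f; norm_num
          rw [hid]
          exact norm_2pow_mul_le 5 131 (by exact_mod_cast norm_int_le 131)
        · show (1/2:ℝ)^(2*0+5) ≤ (1/2)^5
          exact half_pow_le (by omega)
    | succ n =>
      have hgoal2 : rad (lo false (n+1)) ≤ (1/2:ℝ)^(2*(n+1)+5) := by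
        show (1/2:ℝ)^(2*(n+1)+5) ≤ (1/2:ℝ)^(2*(n+1)+5)
        exact le_rfl
      cases w with
      | false =>
        refine ⟨?_, hgoal2⟩
        show ‖f (1 + 2^(n+1+2)) - 2^(2*(n+1)+2)‖ ≤ (1/2:ℝ)^(2*(n+1)+5)
        have hid : f (1 + 2^(n+1+2)) - (2^(2*(n+1)+2) : ℚ_[2])
            = 2^(2*n+7) * (1 + 9*2^n) := by
          unfold f; ring
        rw [hid]
        have h27 : 2*(n+1)+5 = 2*n+7 := by omega
        rw [h27]
        refine norm_2pow_mul_le _ _ ?_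
        refine nonarch_le (by simpa using norm_int_le 1) ?_
        exact_mod_cast norm_int_mul_2pow_le 9 n
      | true =>
        refine ⟨?_, hgoal2⟩
        show ‖f (1 + 3 * 2^(n+1+2)) - 2^(2*(n+1)+2)‖ ≤ (1/2:ℝ)^(2*(n+1)+5)
        have hid : f (1 + 3 * 2^(n+1+2)) - (2^(2*(n+1)+2) : ℚ_[2])
            = 2^(2*n+7) * (10 + 243*2^n) := by
          unfold f; ring
        rw [hid]
        have h27 : 2*(n+1)+5 = 2*n+7 := by omega
        rw [h27]
        refine norm_2pow_mul_le _ _ ?_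
        refine nonarch_le (by exact_mod_cast norm_int_le 10) ?_
        exact_mod_cast norm_int_mul_2pow_le 243 n

end Pf6

namespace Pf7
open Pf Pf2 Pf3 Pf4 Pf5 Pf6 Code

lemma D_sub_union (s : Code) :
    D s ⊆ {y : ℚ_[2] | ‖y‖ ≤ (1/2:ℝ)^2} ∪ {y : ℚ_[2] | ‖y - 1‖ ≤ (1/2:ℝ)^2} := by
  cases s with
  | lo w n =>
    intro x hx
    left
    rw [mem_setOf_eq, (mem_lo_norm hx).1]
    exact half_pow_le (by omega)
  | hi w n =>
    intro x hx
    right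
    rw [mem_setOf_eq, (mem_hi_norm hx).1]
    exact half_pow_le (by omega)

lemma surj_into {s t : Code} (himg : ‖f (ctr s) - ctr t‖ ≤ lam s * rad s)
    (hrad : rad t ≤ lam s * rad s) : ∀ z ∈ D t, ∃ x ∈ D s, f x = z := by
  intro z hz
  apply surj
  have he : z - f (ctr s) = (z - ctr t) + (ctr t - f (ctr s)) := by ring
  rw [he]
  refine nonarch_le ?_ ?_
  · rw [D, mem_closedBall, dist_eq_norm] at hz
    exact le_trans hz hrad
  · rw [norm_sub_rev]; exact himg

/-- every code disk contains a point of `J` -/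
lemma code_nonempty (s : Code) : ∃ x, x ∈ D s ∧ x ∈ J := by
  have hiter : ∀ j, σ^[j+1] s = σ (σ^[j] s) := fun j => Function.iterate_succ_apply' σ j s
  have htr := Pf4.track (fun j => ctr (σ^[j] s)) (fun j => rad (σ^[j] s))
    (fun j => lam (σ^[j] s)) (fun j => rad_pos _) (fun j => lam_pos _)
    (fun j => scale (σ^[j] s))
    (fun j => by
      simp only [hiter j]
      exact surj_into ((sigma_img (σ^[j] s)).1) ((sigma_img (σ^[j] s)).2))
    (Pf5.decay _ _ (fun j => ht (σ^[j] s)) (fun j => rad_pos _) (fun j => lam_pos _)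
      (fun j => by
        simp only [hiter j]
        exact legal_step (legal_sigma (σ^[j] s))))
  obtain ⟨x, hx⟩ := htr.1
  refine ⟨x, ?_, ?_⟩
  · have := hx 0
    simpa [D] using this
  · intro n
    exact D_sub_union (σ^[n] s) (hx n)

lemma A_eq (m : ℕ) : A (m+1) = D (lo false m) := by
  ext x
  rw [A, mem_setOf_eq, D, mem_closedBall, dist_eq_norm]
  have h2 : 2*(m+1)+3 = 2*m+5 := by omega
  rw [show 2*(m+1) = 2*m+2 by omega, show 2*m+2+3 = 2*m+5 by omega]
  rfl

lemma A'_eq (m : ℕ) : A' (m+1) = D (lo true m) := by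
  ext x
  rw [A', mem_setOf_eq, D, mem_closedBall, dist_eq_norm]
  rw [show 2*(m+1) = 2*m+2 by omega, show 2*m+2+3 = 2*m+5 by omega]
  have hc : (2:ℚ_[2])^(2*m+2) + 2^(2*m+2+2) = ctr (lo true m) := by
    show _ = (5:ℚ_[2]) * 2^(2*m+2)
    rw [pow_add]; ring
  rw [← hc]
  rfl

lemma B_eq (m : ℕ) : B (m+1) = D (hi false m) := by
  ext x
  rw [B, mem_setOf_eq, D, mem_closedBall, dist_eq_norm]
  rw [show m+1+1 = m+2 by omega, show m+1+3 = m+4 by omega]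
  rfl

lemma B'_eq (m : ℕ) : B' (m+1) = D (hi true m) := by
  ext x
  rw [B', mem_setOf_eq, D, mem_closedBall, dist_eq_norm]
  rw [show m+1+1 = m+2 by omega, show m+1+3 = m+4 by omega]
  have hc : (1:ℚ_[2]) + 2^(m+2) + 2^(m+2+1) = ctr (hi true m) := by
    show _ = (1:ℚ_[2]) + (3:ℚ_[2]) * 2^(m+2)
    rw [pow_add]; ring
  rw [← hc]
  rfl

lemma alphabet_decomp {t : Set ℚ_[2]} (h : t ∈ alphabet) :
    t = {0} ∨ t = {1} ∨ ∃ s : Code, t = D s ∩ J := by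
  rcases h with h | h | ⟨n, hn, h⟩
  · exact Or.inl h
  · exact Or.inr (Or.inl h)
  · right; right
    obtain ⟨m, rfl⟩ : ∃ m, n = m + 1 := ⟨n - 1, by omega⟩
    rcases h with h | h | h | h
    · exact ⟨lo false m, by rw [h, A_eq]⟩
    · exact ⟨lo true m, by rw [h, A'_eq]⟩
    · exact ⟨hi false m, by rw [h, B_eq]⟩
    · exact ⟨hi true m, by rw [h, B'_eq]⟩

lemma zero_mem_J : (0:ℚ_[2]) ∈ J := by
  intro n
  have h0 : f 0 = 0 := by unfold f; ring
  have hiter : f^[n] (0:ℚ_[2]) = 0 := Function.iterate_fixed h0 n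
  left
  rw [mem_setOf_eq, hiter, norm_zero]
  positivity

lemma one_mem_J : (1:ℚ_[2]) ∈ J := by
  intro n
  cases n with
  | zero =>
    right
    simp
  | succ n =>
    have h1 : f 1 = 0 := by unfold f; ring
    have h0 : f 0 = 0 := by unfold f; ring
    have hiter : f^[n+1] (1:ℚ_[2]) = 0 := by
      rw [Function.iterate_succ_apply, h1]
      exact Function.iterate_fixed h0 n
    left
    rw [mem_setOf_eq, hiter, norm_zero]
    positivity

lemma alphabet_subset_J {t : Set ℚ_[2]} (h : t ∈ alphabet) : t ⊆ J := by
  rcases alphabet_decomp h with rfl | rfl | ⟨s, rfl⟩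
  · intro x hx; rw [mem_singleton_iff] at hx; subst hx; exact zero_mem_J
  · intro x hx; rw [mem_singleton_iff] at hx; subst hx; exact one_mem_J
  · exact inter_subset_right

lemma alphabet_nonempty {t : Set ℚ_[2]} (h : t ∈ alphabet) : t.Nonempty := by
  rcases alphabet_decomp h with rfl | rfl | ⟨s, rfl⟩
  · exact ⟨0, rfl⟩
  · exact ⟨1, rfl⟩
  · obtain ⟨x, h1, h2⟩ := code_nonempty s
    exact ⟨x, h1, h2⟩

end Pf7

namespace Pf8
open Pf Pf2 Pf3 Pf4 Pf5 Pf6 Pf7 Code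

lemma fz_norm_lo {w' : Bool} {n : ℕ} {w : ℚ_[2]} (hw : w ∈ D (lo w' n)) :
    ‖f w‖ = (1/2:ℝ)^(2*n) := by
  obtain ⟨h1, h2⟩ := mem_lo_norm hw
  rw [fnorm, h1, h2, pow_add]
  ring

lemma fz_norm_hi {w' : Bool} {n : ℕ} {w : ℚ_[2]} (hw : w ∈ D (hi w' n)) :
    ‖f w‖ = (1/2:ℝ)^(2*n+2) := by
  obtain ⟨h1, h2⟩ := mem_hi_norm hw
  rw [fnorm, h1, h2, ← pow_mul, show (n+2)*2 = (2*n+2)+2 by omega, pow_add]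
  ring

lemma legal_rad {s t : Code} (h : legal s t) : rad t ≤ lam s * rad s := by
  cases s with
  | lo w n =>
    rw [lam_rad_lo]
    cases n with
    | zero =>
      cases t with
      | lo w' m => exact absurd h (by simp [legal])
      | hi w' m =>
        show (1/2:ℝ)^(m+4) ≤ (1/2)^(2*0+3)
        exact half_pow_le (by omega)
    | succ n =>
      cases t with
      | lo w' m =>
        have hm : m = n := h
        subst hm
        show (1/2:ℝ)^(2*m+5) ≤ (1/2)^(2*(m+1)+3)
        exact half_pow_le (by omega)
      | hi w' m => exact absurd h (by simp [legal])
  | hi w n =>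
    rw [lam_rad_hi]
    cases t with
    | lo w' m =>
      have hm : m = n := h
      subst hm
      show (1/2:ℝ)^(2*m+5) ≤ (1/2)^(2*m+5)
      exact le_rfl
    | hi w' m => exact absurd h (by simp [legal])

end Pf8



open Pf Pf2 Pf3 Pf4 Pf5 Pf6 Pf7 Pf8 Code

/-- For any admissible sequence `γ` of alphabet elements (`γ(j+1) ⊆ f(γ(j))` for all `j`),
there is exactly one point `x ∈ ℚ₂` with `f^[j](x) ∈ γ(j)` for all `j`, and this point
lies in `J`. -/
theorem stmt17 (γ : ℕ → Set ℚ_[2]) (hmem : ∀ j : ℕ, γ j ∈ alphabet)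
    (hadm : ∀ j : ℕ, γ (j + 1) ⊆ f '' γ j) :
    (∃! x : ℚ_[2], ∀ j : ℕ, f^[j] x ∈ γ j) ∧
    (∀ x : ℚ_[2], (∀ j : ℕ, f^[j] x ∈ γ j) → x ∈ J) := by
  classical
  have f0 : f 0 = 0 := by unfold f; ring
  -- backward pullback along γ
  have pull : ∀ N z, z ∈ γ N → ∃ x, f^[N] x = z ∧ ∀ j, j ≤ N → f^[j] x ∈ γ j := by
    intro N
    induction N with
    | zero =>
      intro z hz
      exact ⟨z, rfl, fun j hj => by interval_cases j; exact hz⟩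
    | succ N ih =>
      intro z hz
      obtain ⟨w, hw, hfw⟩ := hadm N hz
      obtain ⟨x, hx1, hx2⟩ := ih w hw
      refine ⟨x, ?_, ?_⟩
      · rw [Function.iterate_succ_apply', hx1, hfw]
      · intro j hj
        rcases Nat.lt_or_ge j (N+1) with h | h
        · exact hx2 j (by omega)
        · have : j = N + 1 := by omega
          subst this
          rw [Function.iterate_succ_apply', hx1, hfw]
          exact hz
  have hJ0 : ∀ x : ℚ_[2], (∀ j : ℕ, f^[j] x ∈ γ j) → x ∈ J := by
    intro x hx
    exact alphabet_subset_J (hmem 0) (by simpa using hx 0)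
  by_cases hsing : ∃ j, γ j = {0} ∨ γ j = {1}
  · -- singleton case
    set j₀ := Nat.find hsing with hj₀def
    have hj₀ := Nat.find_spec hsing
    have hlt : ∀ j, j < j₀ → γ j ≠ {0} ∧ γ j ≠ {1} := by
      intro j hj
      have := Nat.find_min hsing hj
      push_neg at this
      exact this
    have hcode : ∀ j, ∃ s : Code, j < j₀ → γ j = D s ∩ J := by
      intro j
      by_cases hj : j < j₀
      · rcases alphabet_decomp (hmem j) with h | h | ⟨s, h⟩
        · exact absurd h (hlt j hj).1
        · exact absurd h (hlt j hj).2
        · exact ⟨s, fun _ => h⟩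
      · exact ⟨Code.lo false 0, fun h => absurd h hj⟩
    choose s hs using hcode
    obtain ⟨z₀, hz₀γ, hfz₀⟩ : ∃ z₀, z₀ ∈ γ j₀ ∧ f z₀ = 0 := by
      rcases hj₀ with h | h
      · exact ⟨0, by rw [h]; rfl, f0⟩
      · exact ⟨1, by rw [h]; rfl, by unfold f; ring⟩
    have hall0 : ∀ w ∈ γ j₀, f w = 0 := by
      intro w hw
      rcases hj₀ with h | h
      · rw [h, mem_singleton_iff] at hw; rw [hw, f0]
      · rw [h, mem_singleton_iff] at hw; rw [hw]; unfold f; ring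
    obtain ⟨x₀, hx₀N, hx₀⟩ := pull j₀ z₀ hz₀γ
    have hafter : ∀ k, γ (j₀ + k + 1) = {0} := by
      intro k
      induction k with
      | zero =>
        refine (alphabet_nonempty (hmem (j₀+1))).subset_singleton_iff.1 ?_
        intro y hy
        obtain ⟨w, hw, hfw⟩ := hadm j₀ hy
        rw [mem_singleton_iff, ← hfw]
        exact hall0 w hw
      | succ k ih =>
        refine (alphabet_nonempty (hmem (j₀+k+2))).subset_singleton_iff.1 ?_
        intro y hy
        obtain ⟨w, hw, hfw⟩ := hadm (j₀+k+1) hy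
        rw [ih, mem_singleton_iff] at hw
        rw [mem_singleton_iff, ← hfw, hw, f0]
    have htrack0 : ∀ j, f^[j] x₀ ∈ γ j := by
      intro j
      rcases le_or_gt j j₀ with h | h
      · exact hx₀ j h
      · obtain ⟨k, hk⟩ : ∃ k, j = j₀ + k + 1 := ⟨j - j₀ - 1, by omega⟩
        subst hk
        rw [hafter k, mem_singleton_iff]
        have he1 : j₀ + k + 1 = (k + 1) + j₀ := by omega
        rw [he1, Function.iterate_add_apply, hx₀N,
          Function.iterate_succ_apply, hfz₀]
        exact Function.iterate_fixed f0 k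
    have huniq : ∀ x y : ℚ_[2], (∀ j, f^[j] x ∈ γ j) → (∀ j, f^[j] y ∈ γ j) → x = y := by
      intro x y hx hy
      have hsame : f^[j₀] x = f^[j₀] y := by
        rcases hj₀ with h | h
        · have h1 := hx j₀; have h2 := hy j₀
          rw [h, mem_singleton_iff] at h1 h2
          rw [h1, h2]
        · have h1 := hx j₀; have h2 := hy j₀
          rw [h, mem_singleton_iff] at h1 h2
          rw [h1, h2]
      have hexp := Pf4.expand (fun j => ctr (s j)) (fun j => rad (s j))
        (fun j => lam (s j)) (fun j => scale (s j)) j₀ x y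
        (fun j hj => by
          have := hx j
          rw [hs j hj] at this
          exact this.1)
        (fun j hj => by
          have := hy j
          rw [hs j hj] at this
          exact this.1)
      rw [hsame, sub_self, norm_zero] at hexp
      have hprod : (0:ℝ) < ∏ j ∈ Finset.range j₀, lam (s j) :=
        Finset.prod_pos (fun j _ => lam_pos _)
      have : ‖x - y‖ = 0 := by
        by_contra hne
        have h1 : 0 < ‖x - y‖ := lt_of_le_of_ne (norm_nonneg _) (Ne.symm hne)
        nlinarith
      rwa [norm_sub_eq_zero_iff] at this
    exact ⟨⟨x₀, htrack0, fun y hy => huniq y x₀ hy htrack0⟩, hJ0⟩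
  · -- no singletons
    push_neg at hsing
    have hcode : ∀ j, ∃ s : Code, γ j = D s ∩ J := by
      intro j
      rcases alphabet_decomp (hmem j) with h | h | hc
      · exact absurd h (hsing j).1
      · exact absurd h (hsing j).2
      · exact hc
    choose s hs using hcode
    have hnz : ∀ j, ∃ z w, z ∈ D (s (j+1)) ∧ w ∈ D (s j) ∧ f w = z := by
      intro j
      obtain ⟨z, hz⟩ := alphabet_nonempty (hmem (j+1))
      obtain ⟨w, hw, hfw⟩ := hadm j hz
      rw [hs (j+1)] at hz
      rw [hs j] at hw
      exact ⟨z, w, hz.1, hw.1, hfw⟩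
    have hone : ∀ k : ℕ, (1/2:ℝ)^(k+1) ≠ 1 := by
      intro k h
      have := half_lt_half_pow (show 0 < k+1 by omega)
      rw [h] at this
      norm_num at this
    have hlegal : ∀ j, legal (s j) (s (j+1)) := by
      intro j
      obtain ⟨z, w, hz, hw, hfw⟩ := hnz j
      cases hsj : s j with
      | lo w' n =>
        rw [hsj] at hw
        have hzn : ‖z‖ = (1/2:ℝ)^(2*n) := by rw [← hfw]; exact fz_norm_lo hw
        cases hsj1 : s (j+1) with
        | lo w'' m =>
          rw [hsj1] at hz
          have hzm : ‖z‖ = (1/2:ℝ)^(2*m+2) := (mem_lo_norm hz).1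
          have heq : 2*n = 2*m+2 := half_pow_inj (hzn.symm.trans hzm)
          cases n with
          | zero => omega
          | succ n' =>
            show m = n'
            omega
        | hi w'' m =>
          rw [hsj1] at hz
          have hzm : ‖z‖ = 1 := (mem_hi_norm hz).2
          cases n with
          | zero => trivial
          | succ n' =>
            exfalso
            exact hone (2*(n'+1)-1) (by
              rw [show 2*(n'+1)-1+1 = 2*(n'+1) by omega, ← hzn, hzm])
      | hi w' n =>
        rw [hsj] at hw
        have hzn : ‖z‖ = (1/2:ℝ)^(2*n+2) := by rw [← hfw]; exact fz_norm_hi hw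
        cases hsj1 : s (j+1) with
        | lo w'' m =>
          rw [hsj1] at hz
          have hzm : ‖z‖ = (1/2:ℝ)^(2*m+2) := (mem_lo_norm hz).1
          have heq : 2*n+2 = 2*m+2 := half_pow_inj (hzn.symm.trans hzm)
          show m = n
          omega
        | hi w'' m =>
          rw [hsj1] at hz
          have hzm : ‖z‖ = 1 := (mem_hi_norm hz).2
          exfalso
          exact hone (2*n+1) (by rw [show 2*n+1+1 = 2*n+2 by omega, ← hzn, hzm])
    have hsub : ∀ j, ∀ z ∈ closedBall (ctr (s (j+1))) (rad (s (j+1))),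
        ∃ x ∈ closedBall (ctr (s j)) (rad (s j)), f x = z := by
      intro j z hz
      obtain ⟨z₀, w₀, hz₀, hw₀, hfw₀⟩ := hnz j
      apply surj
      have hd : z - f (ctr (s j)) = (z - z₀) + (z₀ - f (ctr (s j))) := by ring
      rw [hd]
      refine nonarch_le ?_ ?_
      · have hradle : rad (s (j+1)) ≤ lam (s j) * rad (s j) := legal_rad (hlegal j)
        have h1 : ‖z - ctr (s (j+1))‖ ≤ rad (s (j+1)) := by
          rwa [mem_closedBall, dist_eq_norm] at hz
        have h2 : ‖z₀ - ctr (s (j+1))‖ ≤ rad (s (j+1)) := by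
          rw [D, mem_closedBall, dist_eq_norm] at hz₀
          exact hz₀
        have he : z - z₀ = (z - ctr (s (j+1))) - (z₀ - ctr (s (j+1))) := by ring
        rw [he]
        exact nonarch_sub_le (le_trans h1 hradle) (le_trans h2 hradle)
      · rw [← hfw₀, norm_sub_rev,
          scale (s j) (ctr (s j)) (mem_closedBall_self (rad_pos _).le) w₀ hw₀]
        apply mul_le_mul_of_nonneg_left _ (lam_pos (s j)).le
        rw [norm_sub_rev]
        rw [D, mem_closedBall, dist_eq_norm] at hw₀
        exact hw₀
    have htr := Pf4.track (fun j => ctr (s j)) (fun j => rad (s j))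
      (fun j => lam (s j)) (fun j => rad_pos _) (fun j => lam_pos _)
      (fun j => scale (s j)) hsub
      (Pf5.decay _ _ (fun j => ht (s j)) (fun j => rad_pos _) (fun j => lam_pos _)
        (fun j => legal_step (hlegal j)))
    obtain ⟨⟨x₀, hx₀⟩, huniq⟩ := htr
    have hDJ : ∀ x : ℚ_[2], (∀ j, f^[j] x ∈ closedBall (ctr (s j)) (rad (s j))) →
        ∀ j, f^[j] x ∈ γ j := by
      intro x hx j
      rw [hs j]
      refine ⟨hx j, ?_⟩
      intro n
      rw [show f^[n] (f^[j] x) = f^[n+j] x from (Function.iterate_add_apply f n j x).symm]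
      exact D_sub_union (s (n+j)) (hx (n+j))
    refine ⟨⟨x₀, hDJ x₀ hx₀, ?_⟩, hJ0⟩
    intro y hy
    refine huniq y x₀ (fun j => ?_) hx₀
    have := hy j
    rw [hs j] at this
    exact this.1
end

section
/- The coding map is continuous on I(f): for every x ∈ J such that f^[m](x) ∉ {0, 1} for all m ≥ 0, and for every N ≥ 0, there exists δ > 0 such that every y ∈ J with |y − x|₂ ≤ δ satisfies: for each j with 0 ≤ j ≤ N there is an element γ ∈ 𝒜 containing both f^[j](x) and f^[j](y) (i.e. x and y have the same itinerary through the partition 𝒜 up to time N). -/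
open Function Set

lemma two_norm : ‖(2 : ℚ_[2])‖ = (1/2 : ℝ) := by
  have := @Padic.norm_p 2 _
  rw [show ((2:ℕ) : ℚ_[2]) = 2 by norm_num] at this
  rw [this]; norm_num

lemma two_pow_norm (k : ℕ) : ‖(2 : ℚ_[2]) ^ k‖ = (1/2 : ℝ) ^ k := by
  rw [norm_pow, two_norm]

lemma unit_close (u : ℚ_[2]) (h : ‖u‖ = 1) : ‖u - 1‖ ≤ (1/2 : ℝ) := by
  set U : ℤ_[2] := ⟨u, h.le⟩ with hU
  have key : (((2:ℕ)) : ℤ_[2]) ∣ U * (U - 1) := by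
    rw [← Ideal.mem_span_singleton, ← PadicInt.maximalIdeal_eq_span_p,
      ← PadicInt.ker_toZMod, RingHom.mem_ker]
    have : ∀ a : ZMod 2, a * (a - 1) = 0 := by decide
    simpa using this (PadicInt.toZMod U)
  obtain ⟨w, hw⟩ := key
  have hnorm : ‖U * (U - 1)‖ ≤ (1/2 : ℝ) := by
    rw [hw, norm_mul]
    have h2 : ‖(((2:ℕ)) : ℤ_[2])‖ = (1/2 : ℝ) := by
      rw [@PadicInt.norm_p 2 _]; norm_num
    calc ‖(((2:ℕ)):ℤ_[2])‖ * ‖w‖ ≤ (1/2 : ℝ) * 1 := by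
          rw [h2]; gcongr; exact w.2
      _ = 1/2 := by ring
  have hcoe : ‖U * (U - 1)‖ = ‖u‖ * ‖u - 1‖ := by
    rw [PadicInt.norm_def]
    push_cast
    rw [norm_mul]
  rw [hcoe, h, one_mul] at hnorm
  exact hnorm

lemma norm_exists_pow (z : ℚ_[2]) (h0 : z ≠ 0) (h : ‖z‖ ≤ 1) :
    ∃ m : ℕ, ‖z‖ = (1/2 : ℝ) ^ m := by
  have hval := Padic.norm_eq_zpow_neg_valuation h0
  have hv : 0 ≤ z.valuation := by
    by_contra hneg
    push_neg at hneg
    have : (1 : ℝ) < (2 : ℝ) ^ (-z.valuation) := by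
      apply one_lt_zpow₀ (by norm_num)
      omega
    rw [hval] at h
    have : ((2:ℕ):ℝ) ^ (-z.valuation) = (2:ℝ) ^ (-z.valuation) := by norm_num
    rw [this] at h
    linarith
  refine ⟨z.valuation.toNat, ?_⟩
  rw [hval]
  have : ((2:ℕ):ℝ) ^ (-z.valuation) = ((1:ℝ)/2) ^ (z.valuation.toNat) := by
    rw [show -z.valuation = -(z.valuation.toNat : ℤ) by omega]
    push_cast
    rw [zpow_neg, zpow_natCast, ← inv_pow]
    norm_num
  rw [this]

lemma pow_half_le_iff {a b : ℕ} : ((1/2:ℝ))^a ≤ (1/2:ℝ)^b ↔ b ≤ a := by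
  rw [show ((1:ℝ)/2) = 2⁻¹ by norm_num, inv_pow, inv_pow,
    inv_le_inv₀ (by positivity) (by positivity)]
  exact pow_le_pow_iff_right₀ (by norm_num)

lemma J_iter (x : ℚ_[2]) (hx : x ∈ J) (j : ℕ) : f^[j] x ∈ J := by
  intro n
  rw [← Function.iterate_add_apply]
  exact hx (n + j)

lemma factor_close (z : ℚ_[2]) (h : ‖z‖ ≤ (1/2 : ℝ) ^ 2) :
    ‖9 * (z - 1) ^ 2 - 1‖ ≤ (1/2 : ℝ) ^ 3 := by
  have hid : 9 * (z - 1) ^ 2 - 1 = 9 * z * (z - 2) + 8 := by ring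
  rw [hid]
  refine le_trans (Padic.nonarchimedean _ _) (max_le ?_ ?_)
  · rw [norm_mul, norm_mul]
    have h9 : ‖(9 : ℚ_[2])‖ ≤ 1 := by
      have h' : (9 : ℚ_[2]) = 2^3 + 1 := by norm_num
      rw [h']
      refine le_trans (Padic.nonarchimedean _ _) (max_le ?_ ?_)
      · rw [two_pow_norm]; norm_num
      · rw [norm_one]
    have h2 : ‖z - 2‖ ≤ (1/2 : ℝ) := by
      have h2' : z - 2 = z + (-2) := by ring
      rw [h2']
      refine le_trans (Padic.nonarchimedean _ _) (max_le ?_ ?_)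
      · exact le_trans h (by norm_num)
      · rw [norm_neg, two_norm]
    calc ‖(9:ℚ_[2])‖ * ‖z‖ * ‖z - 2‖ ≤ 1 * ((1/2:ℝ)^2) * (1/2) :=
          mul_le_mul (mul_le_mul h9 h (norm_nonneg _) (by norm_num)) h2 (norm_nonneg _) (by norm_num)
      _ = (1/2:ℝ)^3 := by norm_num
  · have h8 : (8 : ℚ_[2]) = 2^3 := by norm_num
    rw [h8, two_pow_norm]

lemma norm_four : ‖(4 : ℚ_[2])‖ = (1/4 : ℝ) := by
  have h4 : (4 : ℚ_[2]) = 2^2 := by norm_num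
  rw [h4, two_pow_norm]; norm_num

lemma fz_in_J {z : ℚ_[2]} (hz : z ∈ J) : f z ∈ J := by
  have := J_iter z hz 1
  rwa [Function.iterate_one] at this

lemma keyA : ∀ v : ℕ, 2 ≤ v → ∀ z : ℚ_[2], z ∈ J → ‖z‖ = (1/2 : ℝ) ^ v →
    ∃ n : ℕ, 1 ≤ n ∧ v = 2 * n ∧ ‖z - 2 ^ v‖ ≤ (1/2 : ℝ) ^ (v + 2) := by
  intro v
  induction v using Nat.strong_induction_on with
  | _ v ih =>
  intro hv z hz hnz
  obtain ⟨w, rfl⟩ : ∃ w, v = w + 2 := ⟨v - 2, by omega⟩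
  set u : ℚ_[2] := 9 * (z - 1) ^ 2 with hu
  have hzle : ‖z‖ ≤ (1/2 : ℝ) ^ 2 := hnz ▸ pow_half_le_iff.2 (by omega)
  have hud : ‖u - 1‖ ≤ (1/2 : ℝ) ^ 3 := factor_close z hzle
  have hun : ‖u‖ = 1 := by
    have he : u = (u - 1) + 1 := by ring
    rw [he, Padic.add_eq_max_of_ne (by rw [norm_one]; intro hh; rw [hh] at hud; norm_num at hud),
      norm_one, max_eq_right (le_trans hud (by norm_num))]
  have hzu : z * u = 4 * f z := by simp only [f, hu]; ring
  have hfz : ‖f z‖ = (1/2 : ℝ) ^ w := by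
    have h1 : ‖z * u‖ = (1/2 : ℝ) ^ (w + 2) := by rw [norm_mul, hun, hnz, mul_one]
    rw [hzu, norm_mul, norm_four] at h1
    have h2 : (1/2 : ℝ) ^ (w + 2) = (1/4) * (1/2 : ℝ) ^ w := by rw [pow_add]; ring
    rw [h2] at h1
    linarith
  have hfJ : f z ∈ J := fz_in_J hz
  have hzw : ‖z‖ ≤ (1/2 : ℝ) ^ (w + 2) := le_of_eq hnz
  rcases Nat.lt_or_ge w 2 with h2 | h2
  · interval_cases w
    · rcases hfJ 0 with hc | hc
      · simp only [Function.iterate_zero_apply, mem_setOf_eq] at hc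
        rw [hfz] at hc; norm_num at hc
      · simp only [Function.iterate_zero_apply, mem_setOf_eq] at hc
        refine ⟨1, le_refl 1, by norm_num, ?_⟩
        have hid : z - 2 ^ (0 + 2) = z * (1 - u) + 4 * (f z - 1) := by
          linear_combination hzu
        rw [hid]
        refine le_trans (Padic.nonarchimedean _ _) (max_le ?_ ?_)
        · rw [norm_mul, norm_sub_rev]
          calc ‖z‖ * ‖u - 1‖ ≤ (1/2:ℝ)^2 * (1/2:ℝ)^3 :=
                mul_le_mul hzle hud (norm_nonneg _) (by norm_num)
            _ ≤ (1/2:ℝ) ^ (0 + 2 + 2) := by norm_num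
        · rw [norm_mul, norm_four]
          calc (1/4 : ℝ) * ‖f z - 1‖ ≤ (1/4) * (1/2:ℝ)^2 := by
                gcongr
            _ ≤ (1/2:ℝ) ^ (0 + 2 + 2) := by norm_num
    · exfalso
      rcases hfJ 0 with hc | hc
      · simp only [Function.iterate_zero_apply, mem_setOf_eq] at hc
        rw [hfz] at hc; norm_num at hc
      · simp only [Function.iterate_zero_apply, mem_setOf_eq] at hc
        have he : f z = (f z - 1) + 1 := by ring
        have : ‖f z‖ = 1 := by
          rw [he, Padic.add_eq_max_of_ne (by rw [norm_one]; intro hh; rw [hh] at hc; norm_num at hc),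
            norm_one, max_eq_right (le_trans hc (by norm_num))]
        rw [hfz] at this; norm_num at this
  · obtain ⟨w', rfl⟩ : ∃ w', w = w' + 2 := ⟨w - 2, by omega⟩
    obtain ⟨n', hn1, hwn, hb⟩ := ih (w' + 2) (by omega) (by omega) (f z) hfJ hfz
    have hveq : w' + 2 + 2 = 2 * (n' + 1) := by omega
    refine ⟨n' + 1, by omega, hveq, ?_⟩
    have hid : z - 2 ^ (w' + 2 + 2) = z * (1 - u) + 4 * (f z - 2 ^ (w' + 2)) := by
      linear_combination hzu
    rw [hid]
    refine le_trans (Padic.nonarchimedean _ _) (max_le ?_ ?_)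
    · rw [norm_mul, norm_sub_rev]
      calc ‖z‖ * ‖u - 1‖ ≤ (1/2:ℝ)^(w'+2+2) * (1/2:ℝ)^3 := by
            exact mul_le_mul hzw hud (norm_nonneg _) (by positivity)
        _ ≤ (1/2:ℝ) ^ (w' + 2 + 2 + 2) := by
            rw [← pow_add]
            exact pow_half_le_iff.2 (by omega)
    · rw [norm_mul, norm_four]
      calc (1/4 : ℝ) * ‖f z - 2 ^ (w' + 2)‖ ≤ (1/4) * (1/2:ℝ)^(w'+2+2) := by gcongr
        _ ≤ (1/2:ℝ) ^ (w' + 2 + 2 + 2) := by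
            rw [show (1/4:ℝ) = (1/2:ℝ)^2 by norm_num, ← pow_add]
            exact pow_half_le_iff.2 (by omega)

lemma step_half (s : ℚ_[2]) (k : ℕ) (hs : ‖s‖ = (1/2 : ℝ) ^ k) :
    ‖s - 2 ^ k‖ ≤ (1/2 : ℝ) ^ (k + 1) := by
  have h2 : (2 : ℚ_[2]) ^ k ≠ 0 := pow_ne_zero _ two_ne_zero
  set u := s / 2 ^ k with hu
  have hun : ‖u‖ = 1 := by
    rw [hu, norm_div, two_pow_norm, hs, div_self (by positivity)]
  have hid : s - 2 ^ k = 2 ^ k * (u - 1) := by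
    rw [hu]; field_simp
  rw [hid, norm_mul, two_pow_norm, pow_succ]
  exact mul_le_mul_of_nonneg_left (unit_close u hun) (by positivity)

lemma dich (s : ℚ_[2]) (k : ℕ) (hb : ‖s‖ ≤ (1/2 : ℝ) ^ k)
    (hc : ¬ ‖s‖ ≤ (1/2 : ℝ) ^ (k + 1)) :
    ‖s - 2 ^ k‖ ≤ (1/2 : ℝ) ^ (k + 1) := by
  have hs0 : s ≠ 0 := by
    rintro rfl; exact hc (by rw [norm_zero]; positivity)
  obtain ⟨m, hm⟩ := norm_exists_pow s hs0
    (le_trans hb (pow_le_one₀ (by norm_num) (by norm_num)))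
  have h1 : k ≤ m := pow_half_le_iff.1 (hm ▸ hb)
  have h2 : ¬ (k + 1 ≤ m) := fun h => hc (hm ▸ pow_half_le_iff.2 h)
  have hmk : m = k := by omega
  exact step_half s k (by rw [hm, hmk])

lemma classify (z : ℚ_[2]) (hz : z ∈ J) (h0 : z ≠ 0) (h1 : z ≠ 1) :
    ∃ (c : ℚ_[2]) (k : ℕ), ‖z - c‖ ≤ (1/2 : ℝ) ^ k ∧
      ({x : ℚ_[2] | ‖x - c‖ ≤ (1/2 : ℝ) ^ k} ∩ J) ∈ alphabet := by
  have hz0 := hz 0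
  simp only [Function.iterate_zero_apply, mem_union, mem_setOf_eq] at hz0
  rcases hz0 with hA | hB
  · obtain ⟨m, hm⟩ := norm_exists_pow z h0
      (le_trans hA (by norm_num))
    have hm2 : 2 ≤ m := pow_half_le_iff.1 (hm ▸ hA)
    obtain ⟨n, hn1, rfl, hb⟩ := keyA m hm2 z hz hm
    by_cases hc : ‖z - 2 ^ (2 * n)‖ ≤ (1/2 : ℝ) ^ (2 * n + 3)
    · exact ⟨2 ^ (2 * n), 2 * n + 3, hc, Or.inr (Or.inr ⟨n, hn1, Or.inl rfl⟩)⟩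
    · have hc' : ¬ ‖z - 2 ^ (2 * n)‖ ≤ (1/2 : ℝ) ^ (2 * n + 2 + 1) := by
        rwa [show 2 * n + 2 + 1 = 2 * n + 3 by omega]
      have hd := dich (z - 2 ^ (2 * n)) (2 * n + 2) hb hc'
      rw [sub_sub, show 2 * n + 2 + 1 = 2 * n + 3 by omega] at hd
      exact ⟨2 ^ (2 * n) + 2 ^ (2 * n + 2), 2 * n + 3, hd,
        Or.inr (Or.inr ⟨n, hn1, Or.inr (Or.inl rfl)⟩)⟩
  · have ht0 : z - 1 ≠ 0 := sub_ne_zero.2 h1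
    obtain ⟨m, hm⟩ := norm_exists_pow (z - 1) ht0
      (le_trans hB (by norm_num))
    have hm2 : 2 ≤ m := pow_half_le_iff.1 (hm ▸ hB)
    obtain ⟨n, rfl⟩ : ∃ n, m = (n + 1) + 1 := ⟨m - 2, by omega⟩
    have hn1 : 1 ≤ n + 1 := by omega
    have hstep := step_half (z - 1) (n + 1 + 1) hm
    rw [sub_sub] at hstep
    by_cases hc : ‖z - (1 + 2 ^ (n + 1 + 1))‖ ≤ (1/2 : ℝ) ^ (n + 1 + 3)
    · exact ⟨1 + 2 ^ (n + 1 + 1), n + 1 + 3, hc,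
        Or.inr (Or.inr ⟨n + 1, hn1, Or.inr (Or.inr (Or.inl rfl))⟩)⟩
    · have hc' : ¬ ‖z - (1 + 2 ^ (n + 1 + 1))‖ ≤ (1/2 : ℝ) ^ (n + 1 + 1 + 1 + 1) := by
        rwa [show n + 1 + 1 + 1 + 1 = n + 1 + 3 by omega]
      have hd := dich (z - (1 + 2 ^ (n + 1 + 1))) (n + 1 + 1 + 1) hstep hc'
      rw [sub_sub, show n + 1 + 1 + 1 + 1 = n + 1 + 3 by omega,
        show n + 1 + 1 + 1 = n + 1 + 2 by omega] at hd
      exact ⟨1 + 2 ^ (n + 1 + 1) + 2 ^ (n + 1 + 2), n + 1 + 3, hd,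
        Or.inr (Or.inr ⟨n + 1, hn1, Or.inr (Or.inr (Or.inr rfl))⟩)⟩

lemma f_continuous : Continuous f := by
  unfold f; continuity

/-- Continuity of the coding map on `I(f)`: for every `x ∈ J` whose orbit avoids `{0, 1}`
and every `N ≥ 0`, there is `δ > 0` such that every `y ∈ J` with `|y − x|₂ ≤ δ` has the
same itinerary through the partition `𝒜` as `x` up to time `N`. -/
theorem stmt18 (x : ℚ_[2]) (hx : x ∈ J)
    (hI : ∀ m : ℕ, f^[m] x ≠ 0 ∧ f^[m] x ≠ 1) (N : ℕ) :
    ∃ δ : ℝ, 0 < δ ∧ ∀ y ∈ J, ‖y - x‖ ≤ δ →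
      ∀ j : ℕ, j ≤ N → ∃ γ ∈ alphabet, f^[j] x ∈ γ ∧ f^[j] y ∈ γ := by
  have hcl : ∀ j : ℕ, ∃ (c : ℚ_[2]) (k : ℕ), ‖f^[j] x - c‖ ≤ (1/2 : ℝ) ^ k ∧
      ({w : ℚ_[2] | ‖w - c‖ ≤ (1/2 : ℝ) ^ k} ∩ J) ∈ alphabet := fun j =>
    classify (f^[j] x) (J_iter x hx j) (hI j).1 (hI j).2
  choose c k hck halph using hcl
  have hcont : ∀ j : ℕ, ∃ d : ℝ, 0 < d ∧ ∀ y : ℚ_[2], dist y x < d →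
      dist (f^[j] y) (f^[j] x) < (1/2 : ℝ) ^ (k j) := by
    intro j
    have hc : Continuous (f^[j]) := f_continuous.iterate j
    have := Metric.continuous_iff.1 hc x ((1/2 : ℝ) ^ (k j)) (by positivity)
    obtain ⟨d, hd0, hd⟩ := this
    exact ⟨d, hd0, fun y hy => hd y hy⟩
  choose d hd0 hd using hcont
  have hne : (Finset.range (N + 1)).Nonempty := ⟨0, Finset.mem_range.2 (Nat.succ_pos N)⟩
  set D := (Finset.range (N + 1)).inf' hne d with hD
  have hDpos : 0 < D := (Finset.lt_inf'_iff hne).2 fun i _ => hd0 i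
  refine ⟨D / 2, by positivity, ?_⟩
  intro y hy hyx j hjN
  refine ⟨{w : ℚ_[2] | ‖w - c j‖ ≤ (1/2 : ℝ) ^ (k j)} ∩ J, halph j,
    ⟨hck j, J_iter x hx j⟩, ?_, J_iter y hy j⟩
  have hdist : dist y x < d j := by
    rw [dist_eq_norm]
    calc ‖y - x‖ ≤ D / 2 := hyx
      _ < D := by linarith
      _ ≤ d j := Finset.inf'_le d (Finset.mem_range.2 (by omega))
  have hnear : ‖f^[j] y - f^[j] x‖ < (1/2 : ℝ) ^ (k j) := by
    rw [← dist_eq_norm]; exact hd j y hdist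
  show ‖f^[j] y - c j‖ ≤ (1/2 : ℝ) ^ (k j)
  have hid : f^[j] y - c j = (f^[j] y - f^[j] x) + (f^[j] x - c j) := by ring
  rw [hid]
  exact le_trans (Padic.nonarchimedean _ _) (max_le (le_of_lt hnear) (hck j))
end

section
/- The coding map is open on I(f) (its inverse is continuous): for every x ∈ J with f^[m](x) ∉ {0, 1} for all m ≥ 0 and for every δ > 0, there exists N ≥ 0 such that every y ∈ J with f^[m](y) ∉ {0, 1} for all m ≥ 0 which has the same itinerary as x up to time N (i.e. for each 0 ≤ j ≤ N there is γ ∈ 𝒜 containing both f^[j](x) and f^[j](y)) satisfies |y − x|₂ ≤ δ. In particular, if two points of J have identical itineraries through 𝒜 for all times, they are equal. -/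
open Function Set

/-!
On the disk `‖z‖ ≤ 1/4` the map `f` multiplies distances by exactly `4`. On a letter `B_n` or
`B'_n` it multiplies them by `2⁻ⁿ`, but such a letter satisfies `‖z - 1‖ = 2^{-(n+1)}`, so its
image has norm `4⁻ⁿ` and the next `n` iterates stay in the disk `‖z‖ ≤ 1/4`: over those `n + 1`
steps distances grow by `2ⁿ`, and `(2ⁿ)² ≥ 2^{n+1}`. Measuring squared distances therefore gains
a factor `2` per step, so two points with the same first `N + 1` letters satisfy
`‖x - y‖² ≤ 2⁻ᴺ`. The letters `{0}` and `{1}` are singletons, on which the two points coincide.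
-/

open Metric

section Ultrametric

variable {S : Type*} [SeminormedAddGroup S] [IsUltrametricDist S] {x y : S} {r : ℝ}

lemma norm_add_le_of_le_of_le (hx : ‖x‖ ≤ r) (hy : ‖y‖ ≤ r) : ‖x + y‖ ≤ r :=
  (IsUltrametricDist.norm_add_le_max x y).trans (max_le hx hy)

lemma norm_sub_le_of_le_of_le (hx : ‖x‖ ≤ r) (hy : ‖y‖ ≤ r) : ‖x - y‖ ≤ r := by
  rw [sub_eq_add_neg]
  exact norm_add_le_of_le_of_le hx (by rwa [norm_neg])

lemma norm_add_eq_right_of_norm_lt (h : ‖x‖ < ‖y‖) : ‖x + y‖ = ‖y‖ := by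
  rw [IsUltrametricDist.norm_add_eq_max_of_norm_ne_norm h.ne, max_eq_right h.le]

lemma norm_eq_of_norm_sub_lt (h : ‖x - y‖ < ‖y‖) : ‖x‖ = ‖y‖ := by
  simpa using norm_add_eq_right_of_norm_lt h

end Ultrametric

lemma half_pow_lt_half_pow {m n : ℕ} (h : m < n) : (1 / 2 : ℝ) ^ n < (1 / 2) ^ m :=
  pow_lt_pow_right_of_lt_one₀ (by norm_num) (by norm_num) h

lemma half_pow_le_half_pow {m n : ℕ} (h : m ≤ n) : (1 / 2 : ℝ) ^ n ≤ (1 / 2) ^ m :=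
  pow_le_pow_of_le_one (by norm_num) (by norm_num) h

lemma norm_two_pow (k : ℕ) : ‖(2 : ℚ_[2]) ^ k‖ = (1 / 2 : ℝ) ^ k := by
  rw [norm_pow, show ‖(2 : ℚ_[2])‖ = 1 / 2 by simpa using Padic.norm_p (p := 2)]

lemma norm_one_add_of_norm_lt_one {z : ℚ_[2]} (hz : ‖z‖ < 1) : ‖1 + z‖ = 1 := by
  rw [add_comm, norm_add_eq_right_of_norm_lt (by rwa [norm_one]), norm_one]

lemma norm_sub_one_of_norm_lt_one {z : ℚ_[2]} (hz : ‖z‖ < 1) : ‖z - 1‖ = 1 := by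
  rw [← norm_neg, neg_sub, sub_eq_add_neg, norm_one_add_of_norm_lt_one (by rwa [norm_neg])]

lemma norm_eq_one_of_norm_sub_one_lt_one {z : ℚ_[2]} (hz : ‖z - 1‖ < 1) : ‖z‖ = 1 := by
  simpa using norm_eq_of_norm_sub_lt (y := (1 : ℚ_[2])) (by rwa [norm_one])

lemma norm_nine_div_four : ‖(9 / 4 : ℚ_[2])‖ = 4 := by
  have h9 : ‖(9 : ℚ_[2])‖ = 1 := by
    rw [show (9 : ℚ_[2]) = 1 + 2 ^ 3 by norm_num, norm_one_add_of_norm_lt_one]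
    rw [norm_two_pow]; norm_num
  rw [norm_div, h9, show (4 : ℚ_[2]) = 2 ^ 2 by norm_num, norm_two_pow]
  norm_num

lemma norm_f (a : ℚ_[2]) : ‖f a‖ = 4 * ‖a‖ * ‖a - 1‖ ^ 2 := by
  simp only [f, norm_mul, norm_pow, norm_nine_div_four]

lemma f_sub_f_eq_near_zero (a b : ℚ_[2]) :
    f a - f b = 9 / 4 * (a - b) * (1 + (a * (a + b - 2) + b * (b - 2))) := by
  simp only [f]; ring

lemma f_sub_f_eq_near_one (a b : ℚ_[2]) :
    f a - f b = 9 / 4 * (a - b) *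
      ((a - 1) * ((a - 1) + (b - 1)) + (b - 1) * (b - 1) + ((a - 1) + (b - 1))) := by
  simp only [f]; ring

lemma norm_f_sub_f_of_norm_le_quarter {a b : ℚ_[2]} (ha : ‖a‖ ≤ 1 / 4) (hb : ‖b‖ ≤ 1 / 4) :
    ‖f a - f b‖ = 4 * ‖a - b‖ := by
  have h_int : ∀ z : ℚ_[2], ‖z‖ ≤ 1 / 4 → ‖z - 2‖ ≤ 1 := fun z hz => by
    refine norm_sub_le_of_le_of_le (hz.trans (by norm_num)) ?_
    rw [show (2 : ℚ_[2]) = 2 ^ 1 by norm_num, norm_two_pow]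
    norm_num
  have h_small : ‖a * (a + b - 2) + b * (b - 2)‖ < 1 := by
    refine lt_of_le_of_lt (norm_add_le_of_le_of_le (r := 1 / 4) ?_ ?_) (by norm_num)
    · rw [norm_mul]
      exact (mul_le_of_le_one_right (norm_nonneg a)
        (h_int _ (norm_add_le_of_le_of_le ha hb))).trans ha
    · rw [norm_mul]
      exact (mul_le_of_le_one_right (norm_nonneg b) (h_int b hb)).trans hb
  rw [f_sub_f_eq_near_zero, norm_mul, norm_mul, norm_nine_div_four,
    norm_one_add_of_norm_lt_one h_small, mul_one]

lemma norm_f_sub_f_of_norm_sub_one_le {a b : ℚ_[2]} {n : ℕ} (hn : 1 ≤ n)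
    (ha : ‖a - 1‖ ≤ (1 / 2) ^ (n + 1)) (hb : ‖b - 1‖ ≤ (1 / 2) ^ (n + 1))
    (hab : ‖(a - 1) + (b - 1)‖ = (1 / 2) ^ (n + 2)) :
    ‖f a - f b‖ = (1 / 2) ^ n * ‖a - b‖ := by
  have h_quad : ‖(a - 1) * ((a - 1) + (b - 1)) + (b - 1) * (b - 1)‖ < (1 / 2) ^ (n + 2) := by
    have h_sum : ‖(a - 1) + (b - 1)‖ ≤ (1 / 2) ^ (n + 1) := norm_add_le_of_le_of_le ha hb
    refine lt_of_le_of_lt (norm_add_le_of_le_of_le (r := (1 / 2) ^ (n + 1) * (1 / 2) ^ (n + 1))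
      ?_ ?_) ?_
    · rw [norm_mul]; exact mul_le_mul ha h_sum (norm_nonneg _) (by positivity)
    · rw [norm_mul]; exact mul_le_mul hb hb (norm_nonneg _) (by positivity)
    · rw [← pow_add]; exact half_pow_lt_half_pow (by omega)
  rw [f_sub_f_eq_near_one, norm_mul, norm_mul, norm_nine_div_four,
    norm_add_eq_right_of_norm_lt (hab ▸ h_quad), hab, pow_add]
  ring

section Ball

variable {a b c : ℚ_[2]} {n : ℕ}

lemma norm_sub_one_of_mem_closedBall (hc : ‖c‖ = (1 / 2) ^ (n + 1))
    (ha : a ∈ closedBall (1 + c) ((1 / 2) ^ (n + 3))) : ‖a - 1‖ = (1 / 2) ^ (n + 1) := by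
  rw [← hc]
  refine norm_eq_of_norm_sub_lt ?_
  rw [show a - 1 - c = a - (1 + c) by ring, hc]
  exact (mem_closedBall_iff_norm.1 ha).trans_lt (half_pow_lt_half_pow (by omega))

lemma norm_sub_one_add_sub_one_of_mem_closedBall (hc : ‖c‖ = (1 / 2) ^ (n + 1))
    (ha : a ∈ closedBall (1 + c) ((1 / 2) ^ (n + 3)))
    (hb : b ∈ closedBall (1 + c) ((1 / 2) ^ (n + 3))) :
    ‖(a - 1) + (b - 1)‖ = (1 / 2) ^ (n + 2) := by
  have h2c : ‖2 * c‖ = (1 / 2) ^ (n + 2) := by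
    rw [norm_mul, hc, show (2 : ℚ_[2]) = 2 ^ 1 by norm_num, norm_two_pow, ← pow_add, add_comm]
  rw [show (a - 1) + (b - 1) = (a - (1 + c)) + (b - (1 + c)) + 2 * c by ring,
    norm_add_eq_right_of_norm_lt, h2c]
  rw [h2c]
  exact (norm_add_le_of_le_of_le (mem_closedBall_iff_norm.1 ha)
    (mem_closedBall_iff_norm.1 hb)).trans_lt (half_pow_lt_half_pow (by omega))

end Ball

lemma norm_le_quarter_of_norm_sub_le {c z : ℚ_[2]} {n : ℕ} (hn : 1 ≤ n)
    (hc : ‖c‖ ≤ (1 / 2) ^ (2 * n)) (hz : ‖z - c‖ ≤ (1 / 2) ^ (2 * n + 3)) : ‖z‖ ≤ 1 / 4 := by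
  rw [← sub_add_cancel z c]
  refine (norm_add_le_of_le_of_le (hz.trans (half_pow_le_half_pow (by omega))) hc).trans ?_
  exact (half_pow_le_half_pow (show 2 ≤ 2 * n by omega)).trans (by norm_num)

lemma mem_alphabet_cases {γ : Set ℚ_[2]} (hγ : γ ∈ alphabet) :
    γ = {0} ∨ γ = {1} ∨ γ ⊆ {z | ‖z‖ ≤ 1 / 4} ∨
      ∃ n, 1 ≤ n ∧ ∃ c : ℚ_[2], ‖c‖ = (1 / 2) ^ (n + 1) ∧
        γ ⊆ closedBall (1 + c) ((1 / 2) ^ (n + 3)) := by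
  rcases hγ with rfl | rfl | ⟨n, hn, rfl | rfl | rfl | rfl⟩
  · exact Or.inl rfl
  · exact Or.inr (Or.inl rfl)
  · exact Or.inr (Or.inr (Or.inl fun z hz =>
      norm_le_quarter_of_norm_sub_le hn (norm_two_pow _).le hz.1))
  · refine Or.inr (Or.inr (Or.inl fun z hz => norm_le_quarter_of_norm_sub_le hn ?_ hz.1))
    refine norm_add_le_of_le_of_le (norm_two_pow _).le ?_
    rw [norm_two_pow]; exact half_pow_le_half_pow (by omega)
  · exact Or.inr (Or.inr (Or.inr ⟨n, hn, 2 ^ (n + 1), norm_two_pow _,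
      fun z hz => mem_closedBall_iff_norm.2 hz.1⟩))
  · refine Or.inr (Or.inr (Or.inr ⟨n, hn, 2 ^ (n + 2) + 2 ^ (n + 1), ?_,
      fun z hz => mem_closedBall_iff_norm.2 ?_⟩))
    · rw [norm_add_eq_right_of_norm_lt] <;> rw [norm_two_pow]
      rw [norm_two_pow]; exact half_pow_lt_half_pow (by omega)
    · rw [show (1 : ℚ_[2]) + (2 ^ (n + 2) + 2 ^ (n + 1)) = 1 + 2 ^ (n + 1) + 2 ^ (n + 2) by ring]
      exact hz.1

def SameLetter (a b : ℚ_[2]) : Prop := ∃ γ ∈ alphabet, a ∈ γ ∧ b ∈ γ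

namespace SameLetter

variable {a b : ℚ_[2]}

lemma cases (h : SameLetter a b) :
    (a = 0 ∧ b = 0) ∨ (a = 1 ∧ b = 1) ∨ (‖a‖ ≤ 1 / 4 ∧ ‖b‖ ≤ 1 / 4) ∨
      ∃ n, 1 ≤ n ∧ ‖a - 1‖ = (1 / 2) ^ (n + 1) ∧ ‖a - b‖ ≤ (1 / 2) ^ (n + 1) ∧
        ‖f a - f b‖ = (1 / 2) ^ n * ‖a - b‖ := by
  obtain ⟨γ, hγ, ha, hb⟩ := h
  rcases mem_alphabet_cases hγ with rfl | rfl | hsub | ⟨n, hn, c, hc, hsub⟩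
  · exact Or.inl ⟨ha, hb⟩
  · exact Or.inr (Or.inl ⟨ha, hb⟩)
  · exact Or.inr (Or.inr (Or.inl ⟨hsub ha, hsub hb⟩))
  · have ha1 := norm_sub_one_of_mem_closedBall hc (hsub ha)
    have hb1 := norm_sub_one_of_mem_closedBall hc (hsub hb)
    refine Or.inr (Or.inr (Or.inr ⟨n, hn, ha1, ?_, ?_⟩))
    · rw [← sub_sub_sub_cancel_right a b 1]
      exact norm_sub_le_of_le_of_le ha1.le hb1.le
    · exact norm_f_sub_f_of_norm_sub_one_le hn ha1.le hb1.le
        (norm_sub_one_add_sub_one_of_mem_closedBall hc (hsub ha) (hsub hb))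

lemma norm_le_quarter (h : SameLetter a b) (ha0 : 0 < ‖a‖) (ha1 : ‖a‖ < 1) :
    ‖a‖ ≤ 1 / 4 ∧ ‖b‖ ≤ 1 / 4 := by
  rcases h.cases with ⟨rfl, -⟩ | ⟨rfl, -⟩ | hab | ⟨n, -, ha, -⟩
  · simp at ha0
  · simp at ha1
  · exact hab
  · refine absurd ha1 (not_lt.2 (norm_eq_one_of_norm_sub_one_lt_one ?_).ge)
    rw [ha]; exact pow_lt_one₀ (by norm_num) (by norm_num) (by omega)

end SameLetter

lemma four_pow_mul_quarter_pow_le {i n : ℕ} (h : i < n) : (4 : ℝ) ^ i * (1 / 4) ^ n ≤ 1 / 4 := by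
  calc (4 : ℝ) ^ i * (1 / 4) ^ n ≤ 4 ^ i * (1 / 4) ^ (i + 1) :=
        mul_le_mul_of_nonneg_left (pow_le_pow_of_le_one (by norm_num) (by norm_num) h)
          (by positivity)
    _ = 1 / 4 := by rw [pow_succ, ← mul_assoc, ← mul_pow]; norm_num

lemma norm_iterate_succ_of_norm_sub_one {a : ℚ_[2]} {n i : ℕ}
    (ha : ‖a - 1‖ = (1 / 2) ^ (n + 1)) (hi : i < n) : ‖f^[i + 1] a‖ = 4 ^ i * (1 / 4) ^ n := by
  induction i with
  | zero =>
    have ha_norm : ‖a‖ = 1 := norm_eq_one_of_norm_sub_one_lt_one (by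
      rw [ha]; exact pow_lt_one₀ (by norm_num) (by norm_num) (by omega))
    rw [iterate_one, norm_f, ha_norm, ha, pow_right_comm, pow_succ]
    norm_num
    ring
  | succ i ih =>
    have ih := ih (by omega)
    have h_lt : ‖f^[i + 1] a‖ < 1 := by
      rw [ih]; linarith [four_pow_mul_quarter_pow_le (show i < n by omega)]
    rw [iterate_succ_apply', norm_f, ih, norm_sub_one_of_norm_lt_one (ih ▸ h_lt), pow_succ]
    ring

lemma norm_iterate_sub_iterate_of_norm_le_quarter {a b : ℚ_[2]} (m : ℕ)
    (h : ∀ i < m, ‖f^[i] a‖ ≤ 1 / 4 ∧ ‖f^[i] b‖ ≤ 1 / 4) :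
    ‖f^[m] a - f^[m] b‖ = 4 ^ m * ‖a - b‖ := by
  induction m generalizing a b with
  | zero => simp
  | succ m ih =>
    rw [iterate_succ_apply, iterate_succ_apply, ih fun i hi => h (i + 1) (by omega),
      norm_f_sub_f_of_norm_le_quarter (a := a) (b := b) (h 0 (by omega)).1 (h 0 (by omega)).2,
      pow_succ]
    ring

def SameItineraryUpTo (N : ℕ) (a b : ℚ_[2]) : Prop := ∀ j ≤ N, SameLetter (f^[j] a) (f^[j] b)

namespace SameItineraryUpTo

variable {N : ℕ} {a b : ℚ_[2]}

lemma mono {M : ℕ} (h : SameItineraryUpTo N a b) (hMN : M ≤ N) : SameItineraryUpTo M a b :=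
  fun j hj => h j (hj.trans hMN)

lemma iterate {k : ℕ} (h : SameItineraryUpTo (N + k) a b) :
    SameItineraryUpTo N (f^[k] a) (f^[k] b) := fun j hj => by
  simpa only [← iterate_add_apply] using h (j + k) (by omega)

lemma norm_iterate_sub_of_norm_sub_one {n : ℕ} (h : SameItineraryUpTo n a b)
    (ha : ‖a - 1‖ = (1 / 2) ^ (n + 1)) (hf : ‖f a - f b‖ = (1 / 2) ^ n * ‖a - b‖) :
    ‖f^[n + 1] a - f^[n + 1] b‖ = 2 ^ n * ‖a - b‖ := by
  rw [iterate_succ_apply, iterate_succ_apply,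
    norm_iterate_sub_iterate_of_norm_le_quarter n fun i hi => ?_, hf, ← mul_assoc, ← mul_pow]
  · norm_num
  have h_norm := norm_iterate_succ_of_norm_sub_one ha hi
  refine (h (i + 1) (by omega)).norm_le_quarter ?_ ?_ <;> rw [h_norm]
  · positivity
  · linarith [four_pow_mul_quarter_pow_le hi]

theorem sq_norm_sub_le (h : SameItineraryUpTo N a b) : ‖a - b‖ ^ 2 ≤ (1 / 2) ^ N := by
  induction N using Nat.strong_induction_on generalizing a b with
  | _ N ih =>
  have h0 : SameLetter a b := h 0 N.zero_le
  rcases h0.cases with ⟨rfl, rfl⟩ | ⟨rfl, rfl⟩ | ⟨ha, hb⟩ | ⟨n, hn, ha1, hab, hf⟩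
  · simp
  · simp
  · cases N with
    | zero =>
      calc ‖a - b‖ ^ 2 ≤ (1 / 4) ^ 2 := by gcongr; exact norm_sub_le_of_le_of_le ha hb
        _ ≤ (1 / 2) ^ 0 := by norm_num
    | succ M =>
      have h_next := ih M (by omega) (h.iterate (k := 1))
      rw [iterate_one, norm_f_sub_f_of_norm_le_quarter ha hb] at h_next
      rw [pow_succ (1 / 2 : ℝ)]
      nlinarith [pow_pos (show (0 : ℝ) < 1 / 2 by norm_num) M]
  · by_cases hN : N ≤ n
    · calc ‖a - b‖ ^ 2 ≤ ((1 / 2) ^ (n + 1)) ^ 2 := by gcongr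
        _ = (1 / 2) ^ (2 * n + 2) := by ring
        _ ≤ (1 / 2) ^ N := half_pow_le_half_pow (by omega)
    obtain ⟨M, rfl⟩ : ∃ M, N = M + (n + 1) := ⟨N - (n + 1), by omega⟩
    have h_next := ih M (by omega) h.iterate
    rw [(h.mono (by omega)).norm_iterate_sub_of_norm_sub_one ha1 hf, mul_pow] at h_next
    have h_pow : (2 : ℝ) ^ (n + 1) ≤ (2 ^ n) ^ 2 := by
      rw [← pow_mul]; exact pow_le_pow_right₀ (by norm_num) (by omega)
    have h_split : (1 / 2 : ℝ) ^ (M + (n + 1)) * 2 ^ (n + 1) = (1 / 2) ^ M := by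
      rw [pow_add, mul_assoc, ← mul_pow]; norm_num
    refine le_of_mul_le_mul_right ?_ (by positivity : (0 : ℝ) < 2 ^ (n + 1))
    rw [h_split]
    nlinarith [mul_le_mul_of_nonneg_left h_pow (sq_nonneg ‖a - b‖)]

end SameItineraryUpTo

lemma exists_sameItineraryUpTo_norm_sub_le {δ : ℝ} (hδ : 0 < δ) :
    ∃ N, ∀ a b, SameItineraryUpTo N a b → ‖a - b‖ ≤ δ := by
  obtain ⟨N, hN⟩ := exists_pow_lt_of_lt_one (pow_pos hδ 2) (by norm_num : (1 / 2 : ℝ) < 1)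
  exact ⟨N, fun a b h => (pow_le_pow_iff_left₀ (norm_nonneg _) hδ.le two_ne_zero).1
    (h.sq_norm_sub_le.trans hN.le)⟩

/-- Openness of the coding map on `I(f)` (continuity of its inverse): for every `x ∈ J`
whose orbit avoids `{0, 1}` and every `δ > 0`, there is `N` such that every `y ∈ J` whose
orbit avoids `{0, 1}` and which has the same itinerary through `𝒜` as `x` up to time `N`
satisfies `|y − x|₂ ≤ δ`. In particular, two points of `J` with identical itineraries for
all times are equal. -/
theorem stmt19 :
    (∀ x ∈ J, (∀ m : ℕ, f^[m] x ≠ 0 ∧ f^[m] x ≠ 1) → ∀ δ : ℝ, 0 < δ →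
      ∃ N : ℕ, ∀ y ∈ J, (∀ m : ℕ, f^[m] y ≠ 0 ∧ f^[m] y ≠ 1) →
        (∀ j : ℕ, j ≤ N → ∃ γ ∈ alphabet, f^[j] x ∈ γ ∧ f^[j] y ∈ γ) →
        ‖y - x‖ ≤ δ) ∧
    (∀ x ∈ J, ∀ y ∈ J,
      (∀ j : ℕ, ∃ γ ∈ alphabet, f^[j] x ∈ γ ∧ f^[j] y ∈ γ) → x = y) := by
  refine ⟨fun x _ _ δ hδ => ?_, fun x _ y _ hxy => eq_of_forall_dist_le fun δ hδ => ?_⟩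
  · obtain ⟨N, hN⟩ := exists_sameItineraryUpTo_norm_sub_le hδ
    exact ⟨N, fun y _ _ hxy => norm_sub_rev x y ▸ hN x y hxy⟩
  · obtain ⟨N, hN⟩ := exists_sameItineraryUpTo_norm_sub_le hδ
    exact (dist_eq_norm x y).symm ▸ hN x y fun j _ => hxy j
end
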